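/- arXiv:1204.6086 — 10 statements merged into one kernel-verified Lean document; each statement's English description precedes it below -/
import Mathlib

section
/- For the transposition (x y) in the symmetric group, and a k-cycle (a_1 a_2 ... a_k) on entries disjoint from {x, y}, the product (x a_1)(x a_2)···(x a_{k-1})·(y a_k)(x a_k)(y a_1) composed with (a_1 ... a_k) equals the transposition (x y). -/
/-!
Write the cycle as `(b₁ … b_{k-1} b)`. Inserting a point `c` right after `x` in a cycle through `x`
multiplies it on the right by `(x c)` (conjugating `(c …)` by `(x c)` gives `(x …)`), so
`(x b₁)⋯(x b_{k-1})` is the inverse of the cycle `(x b₁ … b_{k-1})`. Two conjugations of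
transpositions turn `(y b)(x b)(y b₁)·(b₁ … b_{k-1} b)` into `(x y b₁ … b_{k-1})`, which is
`(x b₁ … b_{k-1})(x y)`; hence the whole product is `(x y)`.
-/

namespace List

variable {α : Type*} [DecidableEq α]

theorem formPerm_map_perm (σ : Equiv.Perm α) : ∀ l : List α,
    formPerm (l.map σ) = σ * formPerm l * σ⁻¹
  | [] => by simp
  | [_] => by simp
  | a :: b :: l => by
    rw [map_cons, map_cons, formPerm_cons_cons, ← map_cons, formPerm_map_perm σ (b :: l),
      formPerm_cons_cons, Equiv.swap_apply_apply]
    group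

theorem formPerm_cons_cons_eq_mul_swap {x b : α} {l : List α} (hx : x ∉ l) (hb : b ∉ l) :
    formPerm (x :: b :: l) = formPerm (x :: l) * Equiv.swap x b := by
  have hmap : (x :: l).map (Equiv.swap x b) = b :: l := by
    rw [map_cons, Equiv.swap_apply_left, map_congr_left fun c hc => Equiv.swap_apply_of_ne_of_ne
      (ne_of_mem_of_not_mem hc hx) (ne_of_mem_of_not_mem hc hb), map_id']
  rw [formPerm_cons_cons, ← hmap, formPerm_map_perm, Equiv.swap_inv, mul_assoc,
    Equiv.swap_mul_self_mul]

theorem prod_map_swap_eq_formPerm_inv {x : α} :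
    ∀ {l : List α}, l.Nodup → x ∉ l → (l.map (Equiv.swap x)).prod = (formPerm (x :: l))⁻¹
  | [], _, _ => by simp
  | b :: l, hnd, hx => by
    have hxl : x ∉ l := fun h => hx (mem_cons_of_mem b h)
    rw [nodup_cons] at hnd
    rw [map_cons, prod_cons, prod_map_swap_eq_formPerm_inv hnd.2 hxl,
      formPerm_cons_cons_eq_mul_swap hxl hnd.1, mul_inv_rev, Equiv.swap_inv]

theorem prod_map_swap_mul_mul_formPerm_eq_swap {x y b₁ b : α} {l : List α}
    (hnd : (b₁ :: l ++ [b]).Nodup) (hx : x ∉ b₁ :: l ++ [b]) (hy : y ∉ b₁ :: l ++ [b])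
    (hxy : x ≠ y) :
    ((b₁ :: l).map (Equiv.swap x)).prod *
        (Equiv.swap y b * Equiv.swap x b * Equiv.swap y b₁) * formPerm (b₁ :: l ++ [b]) =
      Equiv.swap x y := by
  have hcycle : formPerm (b₁ :: l ++ [b]) = Equiv.swap b b₁ * formPerm (b₁ :: l) :=
    formPerm_eq_of_isRotated hnd (isRotated_concat b (b₁ :: l))
  have hb₁b : b₁ ≠ b := fun h => (nodup_cons.mp hnd).1 (by simp [h])
  have hxb : x ≠ b := fun h => hx (by simp [h])
  have hyb : y ≠ b := fun h => hy (by simp [h])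
  have hxM : x ∉ b₁ :: l := fun h => hx (mem_append_left _ h)
  have hyM : y ∉ b₁ :: l := fun h => hy (mem_append_left _ h)
  have hP : ((b₁ :: l).map (Equiv.swap x)).prod = (formPerm (x :: b₁ :: l))⁻¹ :=
    prod_map_swap_eq_formPerm_inv (hnd.sublist (sublist_append_left _ _)) hxM
  have hconj₁ : Equiv.swap y b₁ * Equiv.swap b b₁ = Equiv.swap b y * Equiv.swap y b₁ := by
    rw [Equiv.mul_swap_eq_swap_mul, Equiv.swap_apply_of_ne_of_ne hyb.symm hb₁b.symm,
      Equiv.swap_apply_right]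
  have hconj₂ : Equiv.swap y b * Equiv.swap x b * Equiv.swap b y = Equiv.swap x y := by
    rw [Equiv.swap_comm y b, Equiv.swap_mul_swap_mul_swap hxb hxy, Equiv.swap_comm]
  rw [hP]
  calc (formPerm (x :: b₁ :: l))⁻¹ * (Equiv.swap y b * Equiv.swap x b * Equiv.swap y b₁) *
        formPerm (b₁ :: l ++ [b])
      = (formPerm (x :: b₁ :: l))⁻¹ * (Equiv.swap y b * Equiv.swap x b *
          (Equiv.swap b y * Equiv.swap y b₁) * formPerm (b₁ :: l)) := by
        rw [hcycle, ← hconj₁]; simp only [mul_assoc]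
    _ = (formPerm (x :: b₁ :: l))⁻¹ * (Equiv.swap x y * formPerm (y :: b₁ :: l)) := by
        rw [formPerm_cons_cons y, ← hconj₂]; simp only [mul_assoc]
    _ = (formPerm (x :: b₁ :: l))⁻¹ * (formPerm (x :: b₁ :: l) * Equiv.swap x y) := by
        rw [← formPerm_cons_cons x y, formPerm_cons_cons_eq_mul_swap hxM hyM]
    _ = Equiv.swap x y := inv_mul_cancel_left _ _

end List

/-- Keeler's basic identity: for a `k`-cycle `(a 1 ... a k)` with entries in
`{1,...,n}` and outsiders `x = n+1`, `y = n+2`, the product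
`(x a₁)(x a₂)⋯(x a_{k-1}) · (y a_k)(x a_k)(y a₁)` composed with the cycle
equals the transposition `(x y)`. -/
theorem stmt0 (n k : ℕ) (hk : 2 ≤ k) (a : ℕ → ℕ)
    (ha : ∀ i ∈ Finset.Icc 1 k, a i ∈ Finset.Icc 1 n)
    (hinj : Set.InjOn a (Set.Icc 1 k)) :
    (((List.range (k - 1)).map fun i => Equiv.swap (n + 1) (a (i + 1))).prod *
        (Equiv.swap (n + 2) (a k) * Equiv.swap (n + 1) (a k) *
          Equiv.swap (n + 2) (a 1))) *
      ((List.range k).map fun i => a (i + 1)).formPerm =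
      Equiv.swap (n + 1) (n + 2) := by
  obtain ⟨m, rfl⟩ : ∃ m, k = m + 2 := ⟨k - 2, by omega⟩
  have hcycle : (List.range (m + 2)).map (fun i => a (i + 1)) =
      a 1 :: (List.range m).map (fun i => a (i + 2)) ++ [a (m + 2)] := by
    rw [List.range_succ, List.range_succ_eq_map]
    simp
  have hswaps : (List.range (m + 2 - 1)).map (fun i => Equiv.swap (n + 1) (a (i + 1))) =
      (a 1 :: (List.range m).map (fun i => a (i + 2))).map (Equiv.swap (n + 1)) := by
    simp [List.range_succ_eq_map]
  have hnd : ((List.range (m + 2)).map (fun i => a (i + 1))).Nodup :=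
    List.nodup_range.map_on fun i hi j hj h => by
      simp only [List.mem_range] at hi hj
      have := hinj (Set.mem_Icc.mpr ⟨by omega, by omega⟩)
        (Set.mem_Icc.mpr ⟨by omega, by omega⟩) h
      omega
  have hle : ∀ c ∈ (List.range (m + 2)).map (fun i => a (i + 1)), c ≤ n := by
    simp only [List.mem_map, List.mem_range, forall_exists_index, and_imp]
    rintro _ i hi rfl
    exact (Finset.mem_Icc.mp (ha (i + 1) (Finset.mem_Icc.mpr ⟨by omega, by omega⟩))).2
  rw [hcycle] at hnd hle
  rw [hswaps, hcycle]
  exact List.prod_map_swap_mul_mul_formPerm_eq_swap hnd (fun h => by have := hle _ h; omega)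
    (fun h => by have := hle _ h; omega) (by omega)
end

section
/- Suppose the k-cycle (a_1 ... a_k) in S_n equals a product of exactly k - 1 transpositions. Then every entry occurring in one of these transposition factors lies in the set {a_1, ..., a_k}. -/
/-!
Encode a pair `(a, b)` by the vector `e_a - e_b` in `α →₀ ℚ`. If the cycle `σ = (a₁ … a_k)` is a
product of the transpositions listed in `T`, then every `e_x - e_{σ x}` lies in the span of the
vectors of `T`. Hence the span of the `k - 1` independent vectors `e_{aᵢ} - e_{aᵢ₊₁}` sits inside
a space of dimension at most `|T| = k - 1`, so the two spans coincide. The first one consists of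
vectors supported on `{a₁, …, a_k}`, hence so does `e_a - e_b` for every `(a, b) ∈ T`.
-/

open Finsupp Submodule Module

noncomputable section EdgeSpan

variable (K : Type*) [DivisionRing K] {α : Type*}

def edgeVec (p : α × α) : α →₀ K := single p.1 1 - single p.2 1

def edgeSpan (T : List (α × α)) : Submodule K (α →₀ K) :=
  span K {v | v ∈ T.map (edgeVec K)}

variable {K}

instance (T : List (α × α)) : FiniteDimensional K (edgeSpan K T) :=
  FiniteDimensional.span_of_finite K (T.map _).finite_toSet

theorem edgeSpan_cons (p : α × α) (T : List (α × α)) :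
    edgeSpan K (p :: T) = K ∙ edgeVec K p ⊔ edgeSpan K T := by
  rw [edgeSpan, edgeSpan, ← span_insert]
  congr 1
  ext v
  simp

theorem finrank_edgeSpan_le (T : List (α × α)) : finrank K (edgeSpan K T) ≤ T.length := by
  classical
  calc finrank K (edgeSpan K T) ≤ (T.map (edgeVec K)).toFinset.card := by
        rw [edgeSpan, ← List.coe_toFinset]
        exact finrank_span_finset_le_card _
    _ ≤ T.length := (List.toFinset_card_le _).trans (List.length_map _).le

theorem edgeSpan_le_supported {T : List (α × α)} {s : Set α}
    (h : ∀ p ∈ T, p.1 ∈ s ∧ p.2 ∈ s) : edgeSpan K T ≤ supported K K s := by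
  refine span_le.2 ?_
  rintro _ hv
  obtain ⟨p, hp, rfl⟩ := List.mem_map.1 hv
  exact sub_mem (single_mem_supported K _ (h p hp).1) (single_mem_supported K _ (h p hp).2)

theorem mem_of_edgeVec_mem_supported {p : α × α} (hp : p.1 ≠ p.2) {s : Set α}
    (h : edgeVec K p ∈ supported K K s) : p.1 ∈ s ∧ p.2 ∈ s := by
  rw [mem_supported'] at h
  constructor
  · by_contra hs
    simpa [edgeVec, hp] using h _ hs
  · by_contra hs
    simpa [edgeVec, hp.symm] using h _ hs

theorem length_sub_one_le_finrank_edgeSpan_zip_tail {l : List α} (hl : l.Nodup) :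
    l.length - 1 ≤ finrank K (edgeSpan K (l.zip l.tail)) := by
  induction l with
  | nil => simp
  | cons x t ih =>
    cases t with
    | nil => simp
    | cons y t =>
      obtain ⟨hx, hl⟩ := List.nodup_cons.1 hl
      have hnot : edgeVec K (x, y) ∉ edgeSpan K ((y :: t).zip t) := fun hmem =>
        have hsupp := edgeSpan_le_supported (s := {z | z ∈ y :: t})
          (fun p hp => ⟨(List.of_mem_zip hp).1, List.mem_cons_of_mem _ (List.of_mem_zip hp).2⟩) hmem
        hx (mem_of_edgeVec_mem_supported (fun e : x = y => hx (by simp [e])) hsupp).1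
      have hlt := finrank_lt_finrank_of_lt (covBy_span_singleton_sup hnot).1
      rw [List.tail_cons, List.zip_cons_cons, edgeSpan_cons]
      exact Nat.succ_le_of_lt (lt_of_le_of_lt (ih hl) hlt)

variable [DecidableEq α]

theorem edgeVec_swap_mem_span (a b x : α) :
    edgeVec K (x, Equiv.swap a b x) ∈ K ∙ edgeVec K (a, b) := by
  rcases eq_or_ne x a with rfl | hxa
  · simp [mem_span_singleton_self]
  rcases eq_or_ne x b with rfl | hxb
  · have hneg : edgeVec K (x, a) = -edgeVec K (a, x) := (neg_sub _ _).symm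
    rw [Equiv.swap_apply_right, hneg]
    exact Submodule.neg_mem _ (mem_span_singleton_self _)
  · simp [edgeVec, Equiv.swap_apply_of_ne_of_ne hxa hxb]

theorem edgeVec_prod_swap_mem (T : List (α × α)) (x : α) :
    edgeVec K (x, (T.map fun p => Equiv.swap p.1 p.2).prod x) ∈ edgeSpan K T := by
  induction T generalizing x with
  | nil => simp [edgeVec, edgeSpan]
  | cons p T ih =>
    set y := (T.map fun p => Equiv.swap p.1 p.2).prod x
    have hsplit : edgeVec K (x, Equiv.swap p.1 p.2 y) =
        edgeVec K (x, y) + edgeVec K (y, Equiv.swap p.1 p.2 y) := by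
      simp [edgeVec]
    rw [List.map_cons, List.prod_cons, Equiv.Perm.mul_apply, hsplit, edgeSpan_cons, add_comm]
    exact add_mem_sup (edgeVec_swap_mem_span _ _ _) (ih x)

theorem List.formPerm_apply_of_mem_zip_tail {l : List α} (hl : l.Nodup) {a b : α}
    (h : (a, b) ∈ l.zip l.tail) : l.formPerm a = b := by
  induction l with
  | nil => simp at h
  | cons x t ih =>
    cases t with
    | nil => simp at h
    | cons y t =>
      obtain ⟨hx, hl⟩ := List.nodup_cons.1 hl
      rw [List.tail_cons, List.zip_cons_cons, List.mem_cons] at h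
      rw [List.formPerm_cons_cons, Equiv.Perm.mul_apply]
      rcases h with h | h
      · obtain ⟨rfl, rfl⟩ := Prod.mk.inj h
        rw [List.formPerm_apply_of_notMem hx, Equiv.swap_apply_left]
      · have hb : b ∈ t := (List.of_mem_zip h).2
        have hbx : b ≠ x := fun e => hx (e ▸ List.mem_cons_of_mem _ hb)
        have hby : b ≠ y := fun e => (List.nodup_cons.1 hl).1 (e ▸ hb)
        rw [ih hl h, Equiv.swap_apply_of_ne_of_ne hbx hby]

theorem List.mem_of_formPerm_eq_prod_swap {l : List α} (hl : l.Nodup) {T : List (α × α)}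
    (hT : ∀ p ∈ T, p.1 ≠ p.2) (hlen : T.length ≤ l.length - 1)
    (h : l.formPerm = (T.map fun p => Equiv.swap p.1 p.2).prod) :
    ∀ p ∈ T, p.1 ∈ l ∧ p.2 ∈ l := by
  have hle : edgeSpan ℚ (l.zip l.tail) ≤ edgeSpan ℚ T := by
    refine span_le.2 ?_
    rintro _ hv
    obtain ⟨⟨a, b⟩, hab, rfl⟩ := List.mem_map.1 hv
    rw [← List.formPerm_apply_of_mem_zip_tail hl hab, h]
    exact edgeVec_prod_swap_mem T a
  have heq : edgeSpan ℚ (l.zip l.tail) = edgeSpan ℚ T :=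
    eq_of_le_of_finrank_le hle <| (finrank_edgeSpan_le T).trans <|
      hlen.trans (length_sub_one_le_finrank_edgeSpan_zip_tail hl)
  have hsupp : edgeSpan ℚ T ≤ supported ℚ ℚ {x | x ∈ l} := heq ▸ edgeSpan_le_supported
    fun p hp => ⟨(List.of_mem_zip hp).1, List.mem_of_mem_tail (List.of_mem_zip hp).2⟩
  intro p hp
  exact mem_of_edgeVec_mem_supported (hT p hp) (hsupp (subset_span (List.mem_map_of_mem hp)))

end EdgeSpan

theorem stmt4_general (n k : ℕ) (l : List ℕ)
    (hnodup : l.Nodup) (hlen : l.length = k)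
    (T : List (ℕ × ℕ))
    (hT : ∀ p ∈ T, p.1 ≠ p.2 ∧ p.1 ∈ Finset.Icc 1 n ∧ p.2 ∈ Finset.Icc 1 n)
    (hTlen : T.length = k - 1)
    (hprod : l.formPerm = (T.map fun p => Equiv.swap p.1 p.2).prod) :
    ∀ p ∈ T, p.1 ∈ l ∧ p.2 ∈ l :=
  List.mem_of_formPerm_eq_prod_swap hnodup (fun p hp => (hT p hp).1) (by omega) hprod

/-- Lemma 1(b): if the `k`-cycle `(a₁ ... a_k)` in `S_n` equals a product of
exactly `k - 1` transpositions, then every entry of these transposition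
factors lies in `{a₁, ..., a_k}`. -/
theorem stmt4 (n k : ℕ) (hk : 2 ≤ k) (hkn : k ≤ n) (l : List ℕ)
    (hnodup : l.Nodup) (hlen : l.length = k)
    (hrange : ∀ a ∈ l, a ∈ Finset.Icc 1 n)
    (T : List (ℕ × ℕ))
    (hT : ∀ p ∈ T, p.1 ≠ p.2 ∧ p.1 ∈ Finset.Icc 1 n ∧ p.2 ∈ Finset.Icc 1 n)
    (hTlen : T.length = k - 1)
    (hprod : l.formPerm = (T.map fun p => Equiv.swap p.1 p.2).prod) :
    ∀ p ∈ T, p.1 ∈ l ∧ p.2 ∈ l :=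
  stmt4_general n k l hnodup hlen T hT hTlen hprod
end

section
/- For n ≥ 5, let P_1 = (1 2)(2 3)(3 4)···(n-1, n) in S_n. Then the product σ = (3 n)(2, n-1)(1 n)(1 4)(2 n)(1 3)·(3 5)(3 6)···(3, n-1) consists of n + 1 pairwise distinct transpositions, each distinct from every factor of P_1, and σ · P_1 equals the identity. -/
/-!
Write `P_n = (1 2)(2 3)⋯(n-1 n)`, `A_n = (3 n)(2 n-1)(1 n)(1 4)(2 n)(1 3)` and
`T_n = (3 5)⋯(3 n-1)`, so that `σ = A_n T_n`. The identity `A_n T_n P_n = 1` is checked directly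
for `n = 5, 6` and then propagated by induction: `T_{n+1} = T_n (3 n)`, and `T_n` maps `3 ↦ n-1`
and fixes `n`, so `T_n (3 n) = (n-1 n) T_n`; moreover `A_{n+1} (n-1 n) = (n n+1) A_n`, hence
`A_{n+1} T_{n+1} P_{n+1} = (n n+1) (A_n T_n P_n) (n n+1) = 1`.
The combinatorial claims hold because every factor of `σ` is `(a b)` with `1 ≤ a`, `a + 2 ≤ b ≤ n`,
and a transposition `(a b)` with `a < b` determines the pair `(a, b)`.
-/

open Equiv

theorem Equiv.swap_injOn_lt {α : Type*} [LinearOrder α] :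
    Set.InjOn (Function.uncurry swap : α × α → Perm α) {p | p.1 < p.2} := by
  rintro ⟨a, b⟩ (hab : a < b) ⟨c, d⟩ (hcd : c < d) h
  have ha := DFunLike.congr_fun h a
  have hb := DFunLike.congr_fun h b
  simp only [Function.uncurry_apply_pair, swap_apply_left, swap_apply_right] at ha hb
  grind

def headProd (n : ℕ) : Perm ℕ :=
  swap 3 n * swap 2 (n - 1) * swap 1 n * swap 1 4 * swap 2 n * swap 1 3

def tailProd (n : ℕ) : Perm ℕ :=
  ((List.range (n - 5)).map fun i => swap 3 (i + 5)).prod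

def adjacentSwapProd (n : ℕ) : Perm ℕ :=
  ((List.range (n - 1)).map fun i => swap (i + 1) (i + 2)).prod

theorem adjacentSwapProd_succ {n : ℕ} (hn : 1 ≤ n) :
    adjacentSwapProd (n + 1) = adjacentSwapProd n * swap n (n + 1) := by
  obtain ⟨k, rfl⟩ := Nat.exists_eq_add_of_le' hn
  simp [adjacentSwapProd, List.range_succ]

theorem tailProd_succ {n : ℕ} (hn : 5 ≤ n) : tailProd (n + 1) = tailProd n * swap 3 n := by
  obtain ⟨k, rfl⟩ := Nat.exists_eq_add_of_le' hn
  simp [tailProd, List.range_succ]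

theorem tailProd_apply_of_le {n m : ℕ} (hn : 5 ≤ n) (hm : n ≤ m) : tailProd n m = m := by
  induction n, hn using Nat.le_induction with
  | base => simp [tailProd]
  | succ n hn ih =>
    rw [tailProd_succ hn, Perm.mul_apply, swap_apply_of_ne_of_ne (by omega) (by omega),
      ih (by omega)]

theorem tailProd_apply_three {n : ℕ} (hn : 6 ≤ n) : tailProd n 3 = n - 1 := by
  obtain ⟨k, rfl⟩ := Nat.exists_eq_add_of_le' hn
  rw [show k + 6 = (k + 5) + 1 by omega, tailProd_succ (by omega), Perm.mul_apply,
    swap_apply_left, tailProd_apply_of_le (by omega) le_rfl]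
  rfl

theorem tailProd_mul_swap {n : ℕ} (hn : 6 ≤ n) :
    tailProd n * swap 3 n = swap (n - 1) n * tailProd n := by
  rw [mul_swap_eq_swap_mul, tailProd_apply_three hn, tailProd_apply_of_le (by omega) le_rfl]

theorem headProd_succ_mul_swap {n : ℕ} (hn : 6 ≤ n) :
    headProd (n + 1) * swap (n - 1) n = swap n (n + 1) * headProd n := by
  ext x
  simp only [headProd, Nat.add_sub_cancel, Perm.mul_apply]
  obtain rfl | rfl | rfl | rfl | rfl | rfl | rfl | hx :
      x = 1 ∨ x = 2 ∨ x = 3 ∨ x = 4 ∨ x = n - 1 ∨ x = n ∨ x = n + 1 ∨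
        (x ≠ 1 ∧ x ≠ 2 ∧ x ≠ 3 ∧ x ≠ 4 ∧ x ≠ n - 1 ∧ x ≠ n ∧ x ≠ n + 1) := by omega
  all_goals simp (disch := omega) [swap_apply_of_ne_of_ne]

theorem headProd_mul_tailProd_mul_adjacentSwapProd_of_eq_five_or_six {n : ℕ} (h : n = 5 ∨ n = 6) :
    headProd n * tailProd n * adjacentSwapProd n = 1 := by
  ext x
  obtain hx | hx := lt_or_ge x 7
  · rcases h with rfl | rfl <;> interval_cases x <;> decide
  · rcases h with rfl | rfl <;>
      simp (disch := omega) [headProd, tailProd, adjacentSwapProd, List.range_succ,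
        swap_apply_of_ne_of_ne]

theorem headProd_mul_tailProd_mul_adjacentSwapProd {n : ℕ} (hn : 5 ≤ n) :
    headProd n * tailProd n * adjacentSwapProd n = 1 := by
  induction n, hn using Nat.le_induction with
  | base => exact headProd_mul_tailProd_mul_adjacentSwapProd_of_eq_five_or_six (.inl rfl)
  | succ n hn ih =>
    obtain rfl | hn6 := hn.eq_or_lt
    · exact headProd_mul_tailProd_mul_adjacentSwapProd_of_eq_five_or_six (.inr rfl)
    calc headProd (n + 1) * tailProd (n + 1) * adjacentSwapProd (n + 1)
        = headProd (n + 1) * (tailProd n * swap 3 n) * (adjacentSwapProd n * swap n (n + 1)) := by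
          rw [tailProd_succ hn, adjacentSwapProd_succ (by omega)]
      _ = headProd (n + 1) * swap (n - 1) n * tailProd n * adjacentSwapProd n * swap n (n + 1) := by
          rw [tailProd_mul_swap hn6]; simp only [mul_assoc]
      _ = swap n (n + 1) * (headProd n * tailProd n * adjacentSwapProd n) * swap n (n + 1) := by
          rw [headProd_succ_mul_swap hn6]; simp only [mul_assoc]
      _ = 1 := by rw [ih, mul_one, swap_mul_self]

def sigmaPairs (n : ℕ) : List (ℕ × ℕ) :=
  [(3, n), (2, n - 1), (1, n), (1, 4), (2, n), (1, 3)] ++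
    (List.range (n - 5)).map fun i => (3, i + 5)

theorem map_swap_sigmaPairs (n : ℕ) :
    (sigmaPairs n).map (Function.uncurry swap) =
      [swap 3 n, swap 2 (n - 1), swap 1 n, swap 1 4, swap 2 n, swap 1 3] ++
        (List.range (n - 5)).map fun i => swap 3 (i + 5) := by
  simp [sigmaPairs, Function.comp_def]

theorem length_sigmaPairs {n : ℕ} (hn : 5 ≤ n) : (sigmaPairs n).length = n + 1 := by
  simp only [sigmaPairs, List.length_append, List.length_cons, List.length_nil, List.length_map,
    List.length_range]
  omega

theorem bounds_of_mem_sigmaPairs {n : ℕ} (hn : 5 ≤ n) {p : ℕ × ℕ} (hp : p ∈ sigmaPairs n) :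
    1 ≤ p.1 ∧ p.1 + 2 ≤ p.2 ∧ p.2 ≤ n := by
  simp only [sigmaPairs, List.mem_append, List.mem_cons, List.mem_map, List.mem_range,
    List.not_mem_nil, or_false] at hp
  rcases hp with (rfl | rfl | rfl | rfl | rfl | rfl) | ⟨i, hi, rfl⟩ <;> dsimp only <;> omega

theorem sigmaPairs_nodup {n : ℕ} (hn : 5 ≤ n) : (sigmaPairs n).Nodup := by
  have htail : ((List.range (n - 5)).map fun i => (3, i + 5)).Nodup :=
    List.nodup_range.map fun i j h => by simpa using h
  simp only [sigmaPairs, List.cons_append, List.nil_append, List.nodup_cons, htail, and_true]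
  simp only [List.mem_cons, List.mem_map, List.mem_range, Prod.mk.injEq]
  omega

theorem prod_map_swap_sigmaPairs (n : ℕ) :
    ((sigmaPairs n).map (Function.uncurry swap)).prod = headProd n * tailProd n := by
  simp [map_swap_sigmaPairs, headProd, tailProd, mul_assoc]

/-- Theorem 2 (existence part): for `n ≥ 5`, with
`P₁ = (1 2)(2 3)⋯(n-1, n)`, the product
`σ = (3 n)(2, n-1)(1 n)(1 4)(2 n)(1 3)·(3 5)(3 6)⋯(3, n-1)` consists of
`n + 1` pairwise distinct transpositions of `S_n`, each distinct from every
factor `(i, i+1)` of `P₁`, and `σ · P₁ = 1`. -/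
theorem stmt9 (n : ℕ) (hn : 5 ≤ n) :
    ∀ σL : List (Equiv.Perm ℕ),
      σL = [Equiv.swap 3 n, Equiv.swap 2 (n - 1), Equiv.swap 1 n,
          Equiv.swap 1 4, Equiv.swap 2 n, Equiv.swap 1 3] ++
        ((List.range (n - 5)).map fun i => Equiv.swap 3 (i + 5)) →
      σL.length = n + 1 ∧
      σL.Nodup ∧
      (∀ τ ∈ σL, ∃ a b, a ∈ Finset.Icc 1 n ∧ b ∈ Finset.Icc 1 n ∧ a ≠ b ∧
        τ = Equiv.swap a b) ∧
      (∀ τ ∈ σL, ∀ i, 1 ≤ i → i < n → τ ≠ Equiv.swap i (i + 1)) ∧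
      σL.prod * ((List.range (n - 1)).map fun i =>
        Equiv.swap (i + 1) (i + 2)).prod = 1 := by
  rintro σL rfl
  rw [← map_swap_sigmaPairs]
  have hlt : ∀ p ∈ sigmaPairs n, p.1 < p.2 := fun p hp => by
    have := bounds_of_mem_sigmaPairs hn hp; omega
  refine ⟨by rw [List.length_map, length_sigmaPairs hn],
    (sigmaPairs_nodup hn).map_on fun p hp q hq => swap_injOn_lt (hlt p hp) (hlt q hq), ?_, ?_, ?_⟩
  · intro τ hτ
    obtain ⟨⟨a, b⟩, hp, rfl⟩ := List.mem_map.1 hτ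
    obtain ⟨ha, hab, hb⟩ := bounds_of_mem_sigmaPairs hn hp
    exact ⟨a, b, Finset.mem_Icc.2 ⟨ha, by omega⟩, Finset.mem_Icc.2 ⟨by omega, hb⟩, by omega, rfl⟩
  · intro τ hτ i _ _
    obtain ⟨p, hp, rfl⟩ := List.mem_map.1 hτ
    have hne : p ≠ (i, i + 1) := fun h => by
      have := (bounds_of_mem_sigmaPairs hn hp).2.1; simp [h] at this
    exact swap_injOn_lt.ne (hlt p hp) (Nat.lt_succ_self i) hne
  · rw [prod_map_swap_sigmaPairs, ← adjacentSwapProd]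
    exact headProd_mul_tailProd_mul_adjacentSwapProd hn
end

section
/- For n ≥ 5, let P_1 = (1 2)(2 3)···(n-1, n) in S_n. If E is a product of k distinct transpositions in S_n, each distinct from all factors (i, i+1) of P_1, and E · P_1 equals the identity, then k ≥ n + 1. -/
/-!
`E = P₁⁻¹` is the cycle `1 ↦ n ↦ n - 1 ↦ ⋯ ↦ 2 ↦ 1`. Follow each point through the factors of
`E`: a transposition changes the position of exactly two points, so the total number of moves
over all `v ∈ [1, n]` is at most `2k`. Every point moves, since `E` has no fixed points; a point
`v ≥ 2` that moved only once would be carried to `E v = v - 1` by a single factor, which would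
then be the forbidden `(v - 1, v)`. Hence `2k ≥ 1 + 2(n - 1)`, i.e. `k ≥ n`, and `k = n` is ruled
out by parity, as `k + (n - 1)` transpositions multiply to the identity.
-/

open Equiv Finset

section SwapProd

variable {α : Type*} [DecidableEq α]

def swapProd (l : List (α × α)) : Perm α :=
  (l.map fun p => swap p.1 p.2).prod

@[simp]
theorem swapProd_cons (p : α × α) (l : List (α × α)) :
    swapProd (p :: l) = swap p.1 p.2 * swapProd l := rfl

theorem swapProd_append (l₁ l₂ : List (α × α)) :
    swapProd (l₁ ++ l₂) = swapProd l₁ * swapProd l₂ := by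
  simp [swapProd]

def moveCount : List (α × α) → α → ℕ
  | [], _ => 0
  | p :: l, v => moveCount l v + if swap p.1 p.2 (swapProd l v) ≠ swapProd l v then 1 else 0

theorem swapProd_apply_eq_self_of_moveCount_eq_zero {l : List (α × α)} {v : α}
    (h : moveCount l v = 0) : swapProd l v = v := by
  induction l with
  | nil => rfl
  | cons p l ih =>
    simp only [moveCount, Nat.add_eq_zero_iff, ite_eq_right_iff, one_ne_zero, imp_false,
      not_not] at h
    rw [swapProd_cons, Perm.mul_apply, h.2, ih h.1]

theorem swap_eq_swap_apply_of_apply_ne {a b x : α} (h : swap a b x ≠ x) :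
    swap a b = swap x (swap a b x) := by
  obtain ⟨-, rfl | rfl⟩ := swap_apply_ne_self_iff.mp h
  · rw [swap_apply_left]
  · rw [swap_apply_right, swap_comm]

theorem exists_swap_eq_of_moveCount_eq_one {l : List (α × α)} {v : α}
    (h : moveCount l v = 1) : ∃ p ∈ l, swap p.1 p.2 = swap v (swapProd l v) := by
  induction l with
  | nil => simp [moveCount] at h
  | cons p l ih =>
    simp only [moveCount] at h
    split_ifs at h with hmove
    · have hfix := swapProd_apply_eq_self_of_moveCount_eq_zero (Nat.add_right_cancel h)
      refine ⟨p, List.mem_cons_self, ?_⟩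
      rw [swapProd_cons, Perm.mul_apply, hfix]
      rw [hfix] at hmove
      exact swap_eq_swap_apply_of_apply_ne hmove
    · obtain ⟨q, hq, hswap⟩ := ih h
      refine ⟨q, List.mem_cons_of_mem p hq, ?_⟩
      rwa [swapProd_cons, Perm.mul_apply, not_not.mp hmove]

theorem one_le_moveCount {l : List (α × α)} {v : α} (h : swapProd l v ≠ v) :
    1 ≤ moveCount l v :=
  Nat.one_le_iff_ne_zero.mpr (mt swapProd_apply_eq_self_of_moveCount_eq_zero h)

theorem two_le_moveCount {l : List (α × α)} {v : α} (h : swapProd l v ≠ v)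
    (hl : ∀ p ∈ l, swap p.1 p.2 ≠ swap v (swapProd l v)) : 2 ≤ moveCount l v := by
  have := one_le_moveCount h
  by_contra! hlt
  obtain ⟨p, hp, hswap⟩ := exists_swap_eq_of_moveCount_eq_one (by omega : moveCount l v = 1)
  exact hl p hp hswap

theorem sum_moveCount_le (s : Finset α) (l : List (α × α)) :
    ∑ v ∈ s, moveCount l v ≤ 2 * l.length := by
  induction l with
  | nil => simp [moveCount]
  | cons p l ih =>
    have hmoved : #{v ∈ s | swap p.1 p.2 (swapProd l v) ≠ swapProd l v} ≤ 2 := by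
      calc #{v ∈ s | swap p.1 p.2 (swapProd l v) ≠ swapProd l v}
          ≤ #{(swapProd l)⁻¹ p.1, (swapProd l)⁻¹ p.2} := by
            refine card_le_card fun v hv => ?_
            obtain ⟨-, hv | hv⟩ := swap_apply_ne_self_iff.mp (mem_filter.mp hv).2 <;> simp [← hv]
        _ ≤ 2 := card_le_two
    simp only [moveCount, sum_add_distrib, sum_boole, Nat.cast_id, List.length_cons]
    omega

theorem exists_ofSubtype_eq_swapProd {s : Finset α} {l : List (α × α)}
    (hl : ∀ p ∈ l, p.1 ≠ p.2 ∧ p.1 ∈ s ∧ p.2 ∈ s) :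
    ∃ σ : Perm s, σ.ofSubtype = swapProd l ∧ Perm.sign σ = (-1) ^ l.length := by
  induction l with
  | nil => exact ⟨1, map_one _, by simp⟩
  | cons p l ih =>
    obtain ⟨hne, h₁, h₂⟩ := hl p List.mem_cons_self
    obtain ⟨σ, hσ, hsign⟩ := ih fun q hq => hl q (List.mem_cons_of_mem p hq)
    refine ⟨swap ⟨p.1, h₁⟩ ⟨p.2, h₂⟩ * σ, ?_, ?_⟩
    · rw [map_mul, Perm.ofSubtype_swap_eq, hσ, swapProd_cons]
    · rw [Perm.sign_mul, Perm.sign_swap (by simpa using hne), hsign, List.length_cons, pow_succ']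

theorem even_length_of_swapProd_eq_one {s : Finset α} {l : List (α × α)}
    (hl : ∀ p ∈ l, p.1 ≠ p.2 ∧ p.1 ∈ s ∧ p.2 ∈ s) (h : swapProd l = 1) : Even l.length := by
  obtain ⟨σ, hσ, hsign⟩ := exists_ofSubtype_eq_swapProd hl
  have hσ_one : σ = 1 := Perm.ofSubtype_injective (by rw [hσ, h, map_one])
  rw [hσ_one, map_one] at hsign
  exact (neg_one_pow_eq_one_iff_even (by decide)).mp hsign.symm

end SwapProd

def adjacentPairs (m : ℕ) : List (ℕ × ℕ) :=
  (List.range m).map fun i => (i + 1, i + 2)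

theorem swapProd_adjacentPairs (m : ℕ) :
    swapProd (adjacentPairs m) = ((List.range m).map fun i => swap (i + 1) (i + 2)).prod := by
  rw [swapProd, adjacentPairs, List.map_map]
  rfl

theorem swapProd_adjacentPairs_apply (m x : ℕ) :
    swapProd (adjacentPairs m) x
      = if x = m + 1 then 1 else if 1 ≤ x ∧ x ≤ m then x + 1 else x := by
  rw [swapProd_adjacentPairs]
  induction m generalizing x with
  | zero =>
    simp only [List.range_zero, List.map_nil, List.prod_nil, Perm.one_apply]
    split_ifs <;> omega
  | succ m ih =>
    rw [List.range_succ, List.map_append, List.prod_append]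
    simp only [List.map_cons, List.map_nil, List.prod_cons, List.prod_nil, mul_one,
      Perm.mul_apply]
    rw [swap_apply_def]
    split_ifs <;> rw [ih] <;> split_ifs <;> omega

theorem swapProd_adjacentPairs_inv_apply_one (m : ℕ) :
    (swapProd (adjacentPairs m))⁻¹ 1 = m + 1 := by
  rw [Perm.inv_eq_iff_eq, swapProd_adjacentPairs_apply, if_pos rfl]

theorem swapProd_adjacentPairs_inv_apply {m v : ℕ} (h₂ : 2 ≤ v) (hv : v ≤ m + 1) :
    (swapProd (adjacentPairs m))⁻¹ v = v - 1 := by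
  rw [Perm.inv_eq_iff_eq, swapProd_adjacentPairs_apply, if_neg (by omega), if_pos (by omega)]
  omega

theorem mem_adjacentPairs {m : ℕ} {p : ℕ × ℕ} (hp : p ∈ adjacentPairs m) :
    p.1 ≠ p.2 ∧ p.1 ∈ Icc 1 (m + 1) ∧ p.2 ∈ Icc 1 (m + 1) := by
  obtain ⟨i, hi, rfl⟩ := List.mem_map.mp hp
  simp only [List.mem_range] at hi
  simp only [mem_Icc]
  omega

@[simp]
theorem length_adjacentPairs (m : ℕ) : (adjacentPairs m).length = m := by
  simp [adjacentPairs]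

theorem stmt10_general (n k : ℕ) (hn : 5 ≤ n) (L : List (ℕ × ℕ))
    (hL : ∀ p ∈ L, p.1 ≠ p.2 ∧ p.1 ∈ Finset.Icc 1 n ∧ p.2 ∈ Finset.Icc 1 n)
    (havoid : ∀ p ∈ L, ∀ i, 1 ≤ i → i < n →
      Equiv.swap p.1 p.2 ≠ Equiv.swap i (i + 1))
    (hk : L.length = k)
    (hundo : (L.map fun p => Equiv.swap p.1 p.2).prod *
      ((List.range (n - 1)).map fun i => Equiv.swap (i + 1) (i + 2)).prod = 1) :
    n + 1 ≤ k := by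
  subst hk
  have hE : swapProd L = (swapProd (adjacentPairs (n - 1)))⁻¹ :=
    eq_inv_of_mul_eq_one_left (by rwa [swapProd_adjacentPairs])
  have hmove_one : 1 ≤ moveCount L 1 :=
    one_le_moveCount (by rw [hE, swapProd_adjacentPairs_inv_apply_one]; omega)
  have hmove_pred (v : ℕ) (hv : v ∈ Icc 2 n) : 2 ≤ moveCount L v := by
    obtain ⟨h₂, hvn⟩ := mem_Icc.mp hv
    have hEv : swapProd L v = v - 1 := by rw [hE, swapProd_adjacentPairs_inv_apply h₂ (by omega)]
    refine two_le_moveCount (by omega) fun p hp hswap => havoid p hp (v - 1) (by omega) (by omega) ?_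
    rw [hswap, hEv, swap_comm, Nat.sub_add_cancel (by omega)]
  have hcount : 2 * n - 1 ≤ 2 * L.length :=
    calc 2 * n - 1 = 1 + #(Icc 2 n) * 2 := by simp only [Nat.card_Icc]; omega
      _ ≤ moveCount L 1 + ∑ v ∈ Icc 2 n, moveCount L v :=
        add_le_add hmove_one (card_nsmul_le_sum _ _ _ hmove_pred)
      _ = ∑ v ∈ Icc 1 n, moveCount L v := by
        rw [← sum_insert (by simp), ← insert_Icc_succ_left_eq_Icc (by omega : 1 ≤ n)]
        rfl
      _ ≤ 2 * L.length := sum_moveCount_le _ _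
  have hparity : Even (L ++ adjacentPairs (n - 1)).length := by
    refine even_length_of_swapProd_eq_one (s := Icc 1 n) (fun p hp => ?_)
      (by rwa [swapProd_append, swapProd_adjacentPairs])
    rcases List.mem_append.mp hp with hp | hp
    · exact hL p hp
    · simpa only [Nat.sub_add_cancel (by omega : 1 ≤ n)] using mem_adjacentPairs hp
  obtain ⟨r, hr⟩ := hparity
  simp only [List.length_append, length_adjacentPairs] at hr
  omega

/-- Theorem 2 (optimality part): for `n ≥ 5` and
`P₁ = (1 2)(2 3)⋯(n-1, n)` in `S_n`, any product `E` of `k` distinct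
transpositions of `S_n`, each distinct from all factors `(i, i+1)` of `P₁`,
with `E · P₁ = 1`, has `k ≥ n + 1`. -/
theorem stmt10 (n k : ℕ) (hn : 5 ≤ n) (L : List (ℕ × ℕ))
    (hL : ∀ p ∈ L, p.1 ≠ p.2 ∧ p.1 ∈ Finset.Icc 1 n ∧ p.2 ∈ Finset.Icc 1 n)
    (hdistinct : (L.map fun p => Equiv.swap p.1 p.2).Nodup)
    (havoid : ∀ p ∈ L, ∀ i, 1 ≤ i → i < n →
      Equiv.swap p.1 p.2 ≠ Equiv.swap i (i + 1))
    (hk : L.length = k)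
    (hundo : (L.map fun p => Equiv.swap p.1 p.2).prod *
      ((List.range (n - 1)).map fun i => Equiv.swap (i + 1) (i + 2)).prod = 1) :
    n + 1 ≤ k :=
  stmt10_general n k hn L hL havoid hk hundo
end

section
/- For n ≥ 3, let P_2 = (n, n-1)···(n 3)(n 2)(n 1) in S_n, viewed inside S_{n+1}. The product τ = (2, n+1)(3, n+1)···(n, n+1)·(1 2)(1, n+1) consists of n + 1 pairwise distinct transpositions in S_{n+1}, each distinct from every factor of P_2, and τ · P_2 equals the identity. -/
/-!
`P₂` is the `n`-cycle `x ↦ x + 1` on `[1, n)`, `n ↦ 1`. The star product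
`(2, n+1)(3, n+1)⋯(n, n+1)` is the cycle `n+1 ↦ n ↦ n-1 ↦ ⋯ ↦ 2 ↦ n+1`; composing it with
`(1 2)(1, n+1)` cuts `n + 1` out and sends `1 ↦ n`, which gives the cycle
`1 ↦ n ↦ n-1 ↦ ⋯ ↦ 2 ↦ 1`, the inverse of `P₂`. The distinctness claims hold because a
transposition determines the pair of points it exchanges.
-/

open Equiv

theorem Equiv.swap_eq_swap_iff {α : Type*} [DecidableEq α] {a b c d : α} (hab : a ≠ b) :
    swap a b = swap c d ↔ a = c ∧ b = d ∨ a = d ∧ b = c := by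
  constructor
  · intro h
    have ha := congrArg (· a) h
    have hb := congrArg (· b) h
    simp only [swap_apply_left, swap_apply_right, swap_apply_def] at ha hb
    split_ifs at ha hb <;> grind
  · rintro (⟨rfl, rfl⟩ | ⟨rfl, rfl⟩)
    · rfl
    · exact swap_comm _ _

theorem prod_map_swap_add_apply {a c m : ℕ} (hm : 0 < m) (h : a + m ≤ c) (x : ℕ) :
    ((List.range m).map fun i => swap (i + a) c).prod x =
      if x = c then a + m - 1 else if x = a then c else if a < x ∧ x < a + m then x - 1 else x := by
  induction m, hm using Nat.le_induction generalizing x with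
  | base =>
    simp only [List.range_one, List.map_singleton, List.prod_singleton, zero_add, swap_apply_def]
    split_ifs <;> omega
  | succ m hm ih =>
    rw [List.range_succ, List.map_append, List.prod_append]
    simp only [List.map_singleton, List.prod_singleton, Perm.mul_apply]
    rw [ih (by omega)]
    simp only [swap_apply_def]
    split_ifs <;> omega

theorem prod_map_swap_sub_apply {c m : ℕ} (h : m ≤ c) (x : ℕ) :
    ((List.range m).map fun i => swap c (c - 1 - i)).prod x =
      if x = c then c - m else if c - m ≤ x ∧ x < c then x + 1 else x := by
  induction m generalizing x with
  | zero =>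
    simp only [List.range_zero, List.map_nil, List.prod_nil, Perm.one_apply]
    split_ifs <;> omega
  | succ m ih =>
    rw [List.range_succ, List.map_append, List.prod_append]
    simp only [List.map_singleton, List.prod_singleton, Perm.mul_apply]
    rw [ih (by omega)]
    simp only [swap_apply_def]
    split_ifs <;> omega

def tauFactors (n : ℕ) : List (Perm ℕ) :=
  ((List.range (n - 1)).map fun i => swap (i + 2) (n + 1)) ++ [swap 1 2, swap 1 (n + 1)]

def p₂ (n : ℕ) : Perm ℕ :=
  ((List.range (n - 1)).map fun i => swap n (n - 1 - i)).prod

section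

variable {n : ℕ}

theorem mem_tauFactors {τ : Perm ℕ} :
    τ ∈ tauFactors n ↔
      (∃ i < n - 1, swap (i + 2) (n + 1) = τ) ∨ τ = swap 1 2 ∨ τ = swap 1 (n + 1) := by
  simp [tauFactors]

theorem length_tauFactors (hn : 1 ≤ n) : (tauFactors n).length = n + 1 := by
  simp only [tauFactors, List.length_append, List.length_map, List.length_range,
    List.length_cons, List.length_nil]
  omega

theorem nodup_tauFactors (hn : 2 ≤ n) : (tauFactors n).Nodup := by
  simp only [tauFactors, List.nodup_append, List.mem_map, List.mem_range, List.mem_cons,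
    List.not_mem_nil, or_false, List.nodup_cons, List.nodup_nil, not_false_eq_true, and_true]
  refine ⟨List.nodup_range.map ((swap_injective_of_right _).comp (add_left_injective 2)),
    ?_, ?_⟩
  · rw [swap_eq_swap_iff (by omega)]
    omega
  · rintro _ ⟨i, hi, rfl⟩ τ (rfl | rfl) <;> rw [Ne, swap_eq_swap_iff (by omega)] <;> omega

theorem exists_swap_of_mem_tauFactors (hn : 1 ≤ n) {τ : Perm ℕ} (hτ : τ ∈ tauFactors n) :
    ∃ a b, a ∈ Finset.Icc 1 (n + 1) ∧ b ∈ Finset.Icc 1 (n + 1) ∧ a ≠ b ∧ τ = swap a b := by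
  simp only [Finset.mem_Icc]
  rcases mem_tauFactors.1 hτ with ⟨i, hi, rfl⟩ | rfl | rfl
  · exact ⟨i + 2, n + 1, by omega, by omega, by omega, rfl⟩
  · exact ⟨1, 2, by omega, by omega, by omega, rfl⟩
  · exact ⟨1, n + 1, by omega, by omega, by omega, rfl⟩

theorem ne_swap_of_mem_tauFactors (hn : 3 ≤ n) {τ : Perm ℕ} (hτ : τ ∈ tauFactors n)
    {i : ℕ} (hin : i < n) : τ ≠ swap i n := by
  rcases mem_tauFactors.1 hτ with ⟨j, hj, rfl⟩ | rfl | rfl <;>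
    rw [Ne, swap_eq_swap_iff (by omega)] <;> omega

theorem tauFactors_prod_apply (hn : 2 ≤ n) (x : ℕ) :
    (tauFactors n).prod x = if x = 1 then n else if 2 ≤ x ∧ x ≤ n then x - 1 else x := by
  simp only [tauFactors, List.prod_append, List.prod_cons, List.prod_nil, mul_one,
    Perm.mul_apply, prod_map_swap_add_apply (a := 2) (c := n + 1) (m := n - 1) (by omega)
      (by omega), swap_apply_def]
  split_ifs <;> omega

theorem tauFactors_prod_mul_p₂ (hn : 2 ≤ n) : (tauFactors n).prod * p₂ n = 1 := by
  ext x
  rw [Perm.mul_apply, p₂, prod_map_swap_sub_apply (by omega), Perm.one_apply]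
  split_ifs <;> rw [tauFactors_prod_apply hn] <;> split_ifs <;> omega

end

/-- Theorem 3 (existence part): for `n ≥ 3`, with
`P₂ = (n, n-1)⋯(n 3)(n 2)(n 1)` viewed in `S_{n+1}`, the product
`τ = (2, n+1)(3, n+1)⋯(n, n+1)·(1 2)(1, n+1)` consists of `n + 1` pairwise
distinct transpositions of `S_{n+1}`, each distinct from every factor `(i n)`
of `P₂`, and `τ · P₂ = 1`. -/
theorem stmt11 (n : ℕ) (hn : 3 ≤ n) :
    ∀ τL : List (Equiv.Perm ℕ),
      τL = ((List.range (n - 1)).map fun i => Equiv.swap (i + 2) (n + 1)) ++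
        [Equiv.swap 1 2, Equiv.swap 1 (n + 1)] →
      τL.length = n + 1 ∧
      τL.Nodup ∧
      (∀ τ ∈ τL, ∃ a b, a ∈ Finset.Icc 1 (n + 1) ∧ b ∈ Finset.Icc 1 (n + 1) ∧
        a ≠ b ∧ τ = Equiv.swap a b) ∧
      (∀ τ ∈ τL, ∀ i, 1 ≤ i → i < n → τ ≠ Equiv.swap i n) ∧
      τL.prod * ((List.range (n - 1)).map fun i =>
        Equiv.swap n (n - 1 - i)).prod = 1 := by
  rintro τL rfl
  exact ⟨length_tauFactors (by omega), nodup_tauFactors (by omega),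
    fun τ hτ => exists_swap_of_mem_tauFactors (by omega) hτ,
    fun τ hτ _ _ hin => ne_swap_of_mem_tauFactors hn hτ hin,
    tauFactors_prod_mul_p₂ (by omega)⟩
end

section
/- For n ≥ 3, let P_2 = (n, n-1)···(n 2)(n 1) in S_n, viewed in S_{n+1}. If F is a product of k distinct transpositions in S_{n+1}, each distinct from all factors (i n) of P_2, and F · P_2 equals the identity, then k ≥ n + 1. -/
/-!
Write `σ` for the product of the transpositions of `F`. From `F · P₂ = 1`, `σ` sends `j + 1` to `j`
for `1 ≤ j < n`, so in the graph on `{1, …, n + 1}` whose edges are the transpositions of `F`, the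
vertices `1, …, n` lie in one component. As `σ` moves `n`, some factor of `F` moves `n`, and since it
is not one of the `(i n)` with `i < n` it is `(n n+1)`. Hence that graph is connected, and a connected
graph on `n + 1` vertices has at least `n` edges: `k ≥ n`. Finally `F · P₂ = 1` is a product of
`k + (n - 1)` transpositions, so `k + n - 1` is even and `k ≠ n`.
-/

open Equiv SimpleGraph

namespace Equiv.Perm

theorem even_length_of_prod_swap_eq_one {α : Type*} [DecidableEq α] {l : List (α × α)}
    (hne : ∀ p ∈ l, p.1 ≠ p.2) (h : (l.map fun p => swap p.1 p.2).prod = 1) :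
    Even l.length := by
  -- `sign` needs a finite type: pass to the finite set of points occurring in `l`.
  set T : Finset α := l.toFinset.image Prod.fst ∪ l.toFinset.image Prod.snd
  obtain ⟨l', hl'⟩ : ∃ l' : List (T × T), l'.map (Prod.map (↑) (↑)) = l :=
    CanLift.prf l fun p hp =>
      ⟨Finset.mem_union_left _ (Finset.mem_image_of_mem _ (List.mem_toFinset.2 hp)),
        Finset.mem_union_right _ (Finset.mem_image_of_mem _ (List.mem_toFinset.2 hp))⟩
  clear_value T
  subst hl'
  have hone : (l'.map fun p => swap p.1 p.2).prod = 1 := by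
    apply ofSubtype_injective
    rw [map_one, map_list_prod, List.map_map]
    simpa [Function.comp_def, ofSubtype_swap_eq] using h
  rw [List.length_map, ← l'.length_map (fun p => swap p.1 p.2),
    ← prod_list_swap_mem_alternatingGroup_iff_even_length, hone]
  · exact one_mem _
  · simp only [List.mem_map]
    rintro _ ⟨p, hp, rfl⟩
    exact ⟨p.1, p.2, fun h => hne _ (List.mem_map_of_mem hp) (congrArg Subtype.val h), rfl⟩

end Equiv.Perm

namespace SimpleGraph

variable {V : Type*} {G : SimpleGraph V}

theorem ConnectedComponent.ncard_supp_le_ncard_edgeSet_add_one [Finite G.edgeSet]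
    (C : G.ConnectedComponent) : C.supp.ncard ≤ G.edgeSet.ncard + 1 := by
  have hedges : Nat.card C.toSimpleGraph.edgeSet ≤ Nat.card G.edgeSet :=
    Nat.card_le_card_of_injective _ (Embedding.induce C.supp).mapEdgeSet.injective
  exact C.connected_toSimpleGraph.card_vert_le_card_edgeSet_add_one.trans
    (Nat.add_le_add_right hedges 1)

theorem supp_connectedComponentMk_subset_insert_support (v : V) :
    (G.connectedComponentMk v).supp ⊆ insert v G.support := by
  intro w hw
  rw [ConnectedComponent.mem_supp_iff, ConnectedComponent.eq] at hw
  by_cases hwv : w = v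
  · exact Or.inl hwv
  · exact Or.inr (hw.nonempty_neighborSet_left hwv)

theorem Reachable.list_prod_apply {l : List (Perm V)} (hl : ∀ g ∈ l, ∀ x, G.Reachable x (g x))
    (x : V) : G.Reachable x (l.prod x) := by
  induction l with
  | nil => rfl
  | cons g l ih =>
    rw [List.prod_cons, Perm.mul_apply]
    exact (ih fun g' hg' => hl g' (List.mem_cons_of_mem _ hg')).trans (hl g List.mem_cons_self _)

end SimpleGraph

section transpositionGraph

variable {α : Type*}

def transpositionGraph (l : List (α × α)) : SimpleGraph α :=
  fromEdgeSet {e | e ∈ l.map fun p => s(p.1, p.2)}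

theorem edgeSet_transpositionGraph_subset (l : List (α × α)) :
    (transpositionGraph l).edgeSet ⊆ {e | e ∈ l.map fun p => s(p.1, p.2)} :=
  (edgeSet_fromEdgeSet _).subset.trans Set.sdiff_subset

instance (l : List (α × α)) : Finite (transpositionGraph l).edgeSet :=
  (List.finite_toSet _).subset (edgeSet_transpositionGraph_subset l)

theorem ncard_edgeSet_transpositionGraph_le (l : List (α × α)) :
    (transpositionGraph l).edgeSet.ncard ≤ l.length := by
  classical
  calc (transpositionGraph l).edgeSet.ncard
      ≤ {e | e ∈ l.map fun p => s(p.1, p.2)}.ncard :=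
        Set.ncard_le_ncard (edgeSet_transpositionGraph_subset l) (List.finite_toSet _)
    _ = (l.map fun p => s(p.1, p.2)).toFinset.card := by
        rw [← List.coe_toFinset, Set.ncard_coe_finset]
    _ ≤ l.length := (List.toFinset_card_le _).trans (l.length_map _).le

variable {l : List (α × α)}

theorem transpositionGraph_adj {x y : α} :
    (transpositionGraph l).Adj x y ↔ x ≠ y ∧ ∃ p ∈ l, s(p.1, p.2) = s(x, y) := by
  simp [transpositionGraph, and_comm]

theorem support_transpositionGraph_subset {s : Set α} (hl : ∀ p ∈ l, p.1 ∈ s ∧ p.2 ∈ s) :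
    (transpositionGraph l).support ⊆ s := by
  rintro v ⟨w, hvw⟩
  obtain ⟨-, p, hp, hpvw⟩ := transpositionGraph_adj.1 hvw
  rcases Sym2.eq_iff.1 hpvw with ⟨rfl, -⟩ | ⟨-, rfl⟩
  exacts [(hl p hp).1, (hl p hp).2]

theorem transpositionGraph_reachable_prod_apply [DecidableEq α] (x : α) :
    (transpositionGraph l).Reachable x ((l.map fun p => swap p.1 p.2).prod x) := by
  refine Reachable.list_prod_apply ?_ x
  simp only [List.mem_map]
  rintro _ ⟨p, hp, rfl⟩ y
  rcases eq_or_ne p.1 p.2 with hp12 | hp12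
  · rw [hp12, swap_self, refl_apply]
  have hadj : (transpositionGraph l).Adj p.1 p.2 := transpositionGraph_adj.2 ⟨hp12, p, hp, rfl⟩
  rw [swap_apply_def]
  split_ifs with h1 h2
  · exact h1 ▸ hadj.reachable
  · exact h2 ▸ hadj.symm.reachable
  · rfl

theorem card_le_length_add_one_of_reachable {s : Finset α} {r : α} (hr : r ∈ s)
    (hl : ∀ p ∈ l, p.1 ∈ s ∧ p.2 ∈ s) (hs : ∀ x ∈ s, (transpositionGraph l).Reachable r x) :
    s.card ≤ l.length + 1 := by
  set C := (transpositionGraph l).connectedComponentMk r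
  have hsupp : C.supp = s := by
    refine (supp_connectedComponentMk_subset_insert_support r).trans
      (Set.insert_subset hr (support_transpositionGraph_subset hl)) |>.antisymm fun x hx => ?_
    rw [ConnectedComponent.mem_supp_iff, ConnectedComponent.eq]
    exact (hs x hx).symm
  calc s.card = C.supp.ncard := by rw [hsupp, Set.ncard_coe_finset]
    _ ≤ (transpositionGraph l).edgeSet.ncard + 1 :=
        ConnectedComponent.ncard_supp_le_ncard_edgeSet_add_one C
    _ ≤ l.length + 1 := Nat.add_le_add_right (ncard_edgeSet_transpositionGraph_le l) 1

end transpositionGraph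

theorem prod_range_swap_apply {n m : ℕ} (hm : m < n) (j : ℕ) :
    ((List.range m).map fun i => swap n (n - 1 - i)).prod j =
      if j = n then n - m else if n - m ≤ j ∧ j < n then j + 1 else j := by
  induction m generalizing j with
  | zero =>
    simp only [List.range_zero, List.map_nil, List.prod_nil, Perm.one_apply]
    split_ifs <;> omega
  | succ m ih =>
    rw [List.range_succ, List.map_append, List.prod_append, List.map_singleton,
      List.prod_singleton, Perm.mul_apply, swap_apply_def]
    split_ifs <;> rw [ih (by omega)] <;> split_ifs <;> omega

theorem prod_range_swap_apply_of_lt {n j : ℕ} (hj : 1 ≤ j) (hjn : j < n) :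
    ((List.range (n - 1)).map fun i => swap n (n - 1 - i)).prod j = j + 1 := by
  rw [prod_range_swap_apply (by omega)]
  split_ifs <;> omega

section

variable {n : ℕ} {L : List (ℕ × ℕ)}

theorem transpositionGraph_reachable_one_of_prod_apply_succ
    (hσ : ∀ j, 1 ≤ j → j < n → (L.map fun p => swap p.1 p.2).prod (j + 1) = j)
    {j : ℕ} (hj : 1 ≤ j) (hjn : j ≤ n) : (transpositionGraph L).Reachable 1 j := by
  induction j, hj using Nat.le_induction with
  | base => rfl
  | succ j hj ih =>
    have hstep := transpositionGraph_reachable_prod_apply (l := L) (j + 1)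
    rw [hσ j hj (by omega)] at hstep
    exact (ih (by omega)).trans hstep.symm

theorem transpositionGraph_adj_succ_of_prod_apply_succ (hn : 2 ≤ n)
    (hL : ∀ p ∈ L, p.1 ∈ Finset.Icc 1 (n + 1) ∧ p.2 ∈ Finset.Icc 1 (n + 1))
    (havoid : ∀ p ∈ L, ∀ i, 1 ≤ i → i < n → swap p.1 p.2 ≠ swap i n)
    (hσ : ∀ j, 1 ≤ j → j < n → (L.map fun p => swap p.1 p.2).prod (j + 1) = j) :
    (transpositionGraph L).Adj n (n + 1) := by
  have hσn : (L.map fun p => swap p.1 p.2).prod n = n - 1 := by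
    simpa [Nat.sub_add_cancel (by omega : 1 ≤ n)] using hσ (n - 1) (by omega) (by omega)
  obtain ⟨w, hw⟩ :=
    (transpositionGraph_reachable_prod_apply (l := L) n).nonempty_neighborSet_left (by omega)
  have hw_mem : w ∈ Finset.Icc 1 (n + 1) :=
    support_transpositionGraph_subset (s := ↑(Finset.Icc 1 (n + 1))) hL hw.right_mem_support
  obtain ⟨hnw, p, hp, hpnw⟩ := transpositionGraph_adj.1 hw
  rw [Finset.mem_Icc] at hw_mem
  suffices w = n + 1 from this ▸ hw
  by_contra hw'
  refine havoid p hp w hw_mem.1 (by omega) ?_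
  rcases Sym2.eq_iff.1 hpnw with ⟨h1, h2⟩ | ⟨h1, h2⟩ <;> rw [h1, h2]
  exact swap_comm _ _

end

theorem stmt12_general (n k : ℕ) (hn : 3 ≤ n) (L : List (ℕ × ℕ))
    (hL : ∀ p ∈ L, p.1 ≠ p.2 ∧ p.1 ∈ Finset.Icc 1 (n + 1) ∧
      p.2 ∈ Finset.Icc 1 (n + 1))
    (havoid : ∀ p ∈ L, ∀ i, 1 ≤ i → i < n →
      Equiv.swap p.1 p.2 ≠ Equiv.swap i n)
    (hk : L.length = k)
    (hundo : (L.map fun p => Equiv.swap p.1 p.2).prod *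
      ((List.range (n - 1)).map fun i => Equiv.swap n (n - 1 - i)).prod = 1) :
    n + 1 ≤ k := by
  subst hk
  have hσ : ∀ j, 1 ≤ j → j < n → (L.map fun p => swap p.1 p.2).prod (j + 1) = j := by
    intro j hj hjn
    simpa [prod_range_swap_apply_of_lt hj hjn] using congrArg (· j) hundo
  have hbound := fun p hp => (hL p hp).2
  have hconnected : ∀ x ∈ Finset.Icc 1 (n + 1), (transpositionGraph L).Reachable 1 x := by
    intro x hx
    rw [Finset.mem_Icc] at hx
    rcases Nat.lt_or_ge x (n + 1) with hxn | hxn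
    · exact transpositionGraph_reachable_one_of_prod_apply_succ hσ hx.1 (by omega)
    · rw [le_antisymm hx.2 hxn]
      exact (transpositionGraph_reachable_one_of_prod_apply_succ hσ (by omega) le_rfl).trans
        (transpositionGraph_adj_succ_of_prod_apply_succ (by omega) hbound havoid hσ).reachable
  have hlen := card_le_length_add_one_of_reachable (by simp) hbound hconnected
  have heven : Even (L.length + (n - 1)) := by
    have hne : ∀ p ∈ L ++ (List.range (n - 1)).map fun i => (n, n - 1 - i), p.1 ≠ p.2 := by
      simp only [List.mem_append, List.mem_map]
      rintro p (hp | ⟨i, -, rfl⟩)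
      · exact (hL p hp).1
      · dsimp only; omega
    simpa using Perm.even_length_of_prod_swap_eq_one hne (by simpa [Function.comp_def] using hundo)
  rw [Nat.card_Icc] at hlen
  obtain ⟨c, hc⟩ := heven
  omega

/-- Theorem 3 (optimality part): for `n ≥ 3` and
`P₂ = (n, n-1)⋯(n 2)(n 1)` viewed in `S_{n+1}`, any product `F` of `k`
distinct transpositions of `S_{n+1}`, each distinct from all factors `(i n)`
of `P₂`, with `F · P₂ = 1`, has `k ≥ n + 1`. -/
theorem stmt12 (n k : ℕ) (hn : 3 ≤ n) (L : List (ℕ × ℕ))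
    (hL : ∀ p ∈ L, p.1 ≠ p.2 ∧ p.1 ∈ Finset.Icc 1 (n + 1) ∧
      p.2 ∈ Finset.Icc 1 (n + 1))
    (hdistinct : (L.map fun p => Equiv.swap p.1 p.2).Nodup)
    (havoid : ∀ p ∈ L, ∀ i, 1 ≤ i → i < n →
      Equiv.swap p.1 p.2 ≠ Equiv.swap i n)
    (hk : L.length = k)
    (hundo : (L.map fun p => Equiv.swap p.1 p.2).prod *
      ((List.range (n - 1)).map fun i => Equiv.swap n (n - 1 - i)).prod = 1) :
    n + 1 ≤ k :=
  stmt12_general n k hn L hL havoid hk hundo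
end

section
/- The identity permutation cannot be written as a product of 2 distinct transpositions in S_n, nor as a product of 4 distinct transpositions in S_n. -/
open Equiv

private lemma swap_eq_of_ne' {α : Type*} [DecidableEq α] {s : Equiv.Perm α} (hs : s.IsSwap)
    {t : α} (ht : s t ≠ t) : s = Equiv.swap t (s t) := by
  obtain ⟨x, y, hxy, rfl⟩ := hs
  rcases eq_or_ne t x with rfl | hx
  · simp
  rcases eq_or_ne t y with rfl | hy
  · rw [Equiv.swap_apply_right, Equiv.swap_comm]
  · exact absurd (Equiv.swap_apply_of_ne_of_ne hx hy) ht

private lemma isSwap_inv_eq {α : Type*} [DecidableEq α] {s : Equiv.Perm α} (hs : s.IsSwap) :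
    s⁻¹ = s := by
  obtain ⟨x, y, hxy, rfl⟩ := hs
  exact Equiv.swap_inv x y

private lemma isSwap_mul_self {α : Type*} [DecidableEq α] {s : Equiv.Perm α} (hs : s.IsSwap) :
    s * s = 1 := by
  obtain ⟨x, y, hxy, rfl⟩ := hs
  exact Equiv.swap_mul_self x y

/-- If a product of two swaps is not 1 and fixes `t`, then each factor fixes `t`. -/
private lemma fix_fix {α : Type*} [DecidableEq α] {u v : Equiv.Perm α} (hu : u.IsSwap)
    (hv : v.IsSwap) (hne : u * v ≠ 1) {t : α} (ht : (u * v) t = t) : u t = t ∧ v t = t := by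
  by_cases h : u t = t
  · refine ⟨h, ?_⟩
    have : u (v t) = u t := by
      rw [h]; simpa [Equiv.Perm.mul_apply] using ht
    exact u.injective this
  · exfalso
    have hvt : v t = u t := by
      have hv2 : v = u * (u * v) := by rw [← mul_assoc, isSwap_mul_self hu, one_mul]
      rw [hv2]; simp [Equiv.Perm.mul_apply, ht]
    have hvt' : v t ≠ t := by rw [hvt]; exact h
    have h1 : v = Equiv.swap t (v t) := swap_eq_of_ne' hv hvt'
    have h2 : u = Equiv.swap t (u t) := swap_eq_of_ne' hu h
    have huv : u = v := by rw [h1, h2, hvt]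
    rw [huv, isSwap_mul_self hv] at hne
    exact hne rfl

/-- Normalization: two distinct swaps either have disjoint supports or share exactly one point. -/
private lemma swap_cases {α : Type*} [DecidableEq α] {a b : Equiv.Perm α} (ha : a.IsSwap)
    (hb : b.IsSwap) (hab : a ≠ b) :
    (∃ x y z w, x ≠ y ∧ x ≠ z ∧ x ≠ w ∧ y ≠ z ∧ y ≠ w ∧ z ≠ w ∧
      a = Equiv.swap x y ∧ b = Equiv.swap z w) ∨
    (∃ u v w, u ≠ v ∧ u ≠ w ∧ v ≠ w ∧ a = Equiv.swap u v ∧ b = Equiv.swap v w) := by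
  obtain ⟨x, y, hxy, rfl⟩ := ha
  obtain ⟨z, w, hzw, rfl⟩ := hb
  by_cases hyz : y = z
  · subst hyz
    right
    refine ⟨x, y, w, hxy, ?_, hzw, rfl, rfl⟩
    rintro rfl
    exact hab (Equiv.swap_comm x y)
  by_cases hyw : y = w
  · subst hyw
    right
    refine ⟨x, y, z, hxy, ?_, fun h => hzw h.symm, rfl, Equiv.swap_comm z y⟩
    rintro rfl
    exact hab rfl
  by_cases hxz : x = z
  · subst hxz
    right
    exact ⟨y, x, w, fun h => hxy h.symm, hyw, hzw, Equiv.swap_comm x y, rfl⟩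
  by_cases hxw : x = w
  · subst hxw
    right
    exact ⟨y, x, z, fun h => hxy h.symm, hyz, fun h => hzw h.symm,
      Equiv.swap_comm x y, Equiv.swap_comm z x⟩
  · left
    exact ⟨x, y, z, w, hxy, hxz, hxw, hyz, hyw, hzw, rfl, rfl⟩

/-- Key lemma: if `a*b = d*c` for swaps with `a ≠ b`, `d ≠ c`,
then `d` or `c` coincides with `a` or `b`. -/
private lemma key {α : Type*} [DecidableEq α] {a b d c : Equiv.Perm α} (ha : a.IsSwap)
    (hb : b.IsSwap) (hd : d.IsSwap) (hc : c.IsSwap) (hab : a ≠ b) (hdc : d ≠ c)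
    (h : a * b = d * c) : d = a ∨ d = b ∨ c = a ∨ c = b := by
  set g := a * b with hg
  have hg1 : g ≠ 1 := by
    intro h1
    have hab1 : a * b = 1 := by rw [← hg]; exact h1
    have h2 : a⁻¹ = b := inv_eq_of_mul_eq_one_right hab1
    exact hab (by rw [← h2, isSwap_inv_eq ha])
  -- c = d * g and the relation d * g = g⁻¹ * d
  have hceq : c = d * g := by
    rw [h, ← mul_assoc, isSwap_mul_self hd, one_mul]
  have hrel : d * g = g⁻¹ * d := by
    have h1 : c⁻¹ = c := isSwap_inv_eq hc
    calc d * g = c := hceq.symm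
    _ = c⁻¹ := h1.symm
    _ = g⁻¹ * d⁻¹ := by rw [hceq, mul_inv_rev]
    _ = g⁻¹ * d := by rw [isSwap_inv_eq hd]
  -- points fixed by g are fixed by d and c
  have hfix : ∀ t, g t = t → d t = t ∧ c t = t := by
    intro t ht
    apply fix_fix hd hc
    · rw [← h]; exact hg1
    · rw [← h]; exact ht
  obtain ⟨p, q, hpq, hdpq⟩ := hd
  have hdp : d p = q := by rw [hdpq]; simp
  have hdq : d q = p := by rw [hdpq]; simp
  have hgp : g p ≠ p := by
    intro hh
    have : q = p := by rw [← hdp]; exact (hfix p hh).1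
    exact hpq this.symm
  have hgq : g q ≠ q := by
    intro hh
    have : p = q := by rw [← hdq]; exact (hfix q hh).1
    exact hpq this
  have hcval : ∀ t, c t = d (g t) := by
    intro t
    rw [hceq]; rfl
  rcases swap_cases ha hb hab with ⟨x, y, z, w, h1, h2, h3, h4, h5, h6, hA, hB⟩ |
      ⟨u, v, w, h1, h2, h3, hA, hB⟩
  · -- Case A : disjoint supports, g is a double transposition, g⁻¹ = g
    have hgval : ∀ t, g t = (Equiv.swap x y) ((Equiv.swap z w) t) := by
      intro t; rw [hg, hA, hB]; rfl
    have hdisj : Equiv.Perm.Disjoint a b := by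
      intro t
      by_cases htx : t = x
      · right; rw [hB]; subst htx; exact Equiv.swap_apply_of_ne_of_ne h2 h3
      by_cases hty : t = y
      · right; rw [hB]; subst hty; exact Equiv.swap_apply_of_ne_of_ne h4 h5
      · left; rw [hA]; exact Equiv.swap_apply_of_ne_of_ne htx hty
    have hginv : g⁻¹ = g := by
      have hcomm : a * b = b * a := hdisj.commute.eq
      rw [hg, mul_inv_rev, isSwap_inv_eq ha, isSwap_inv_eq hb, hcomm]
    have hcomm : ∀ t, d (g t) = g (d t) := by
      intro t
      have := Equiv.ext_iff.mp hrel t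
      simpa [Equiv.Perm.mul_apply, hginv] using this
    -- g p = q
    have hgpq : g p = q := by
      by_contra hne
      have h7 : d (g p) = g p := by
        rw [hdpq]; exact Equiv.swap_apply_of_ne_of_ne hgp hne
      have h8 : d (g p) = g q := by rw [hcomm p, hdp]
      have h9 : g p = g q := h7.symm.trans h8
      exact hpq (g.injective h9)
    -- p must be one of x,y,z,w
    have hp4 : p = x ∨ p = y ∨ p = z ∨ p = w := by
      by_contra hcon
      push_neg at hcon
      obtain ⟨c1, c2, c3, c4⟩ := hcon
      apply hgp
      rw [hgval, Equiv.swap_apply_of_ne_of_ne c3 c4, Equiv.swap_apply_of_ne_of_ne c1 c2]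
    rcases hp4 with rfl | rfl | rfl | rfl
    · left
      have hq : q = y := by
        rw [← hgpq, hgval, Equiv.swap_apply_of_ne_of_ne h2 h3, Equiv.swap_apply_left]
      rw [hdpq, hq, hA]
    · left
      have hq : q = x := by
        rw [← hgpq, hgval, Equiv.swap_apply_of_ne_of_ne h4 h5, Equiv.swap_apply_right]
      rw [hdpq, hq, hA, Equiv.swap_comm]
    · right; left
      have hq : q = w := by
        rw [← hgpq, hgval, Equiv.swap_apply_left,
          Equiv.swap_apply_of_ne_of_ne (fun hh => h3 hh.symm) (fun hh => h5 hh.symm)]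
      rw [hdpq, hq, hB]
    · right; left
      have hq : q = z := by
        rw [← hgpq, hgval, Equiv.swap_apply_right,
          Equiv.swap_apply_of_ne_of_ne (fun hh => h2 hh.symm) (fun hh => h4 hh.symm)]
      rw [hdpq, hq, hB, Equiv.swap_comm]
  · -- Case B : shared point, g is the 3-cycle (u v w)
    have hgval : ∀ t, g t = (Equiv.swap u v) ((Equiv.swap v w) t) := by
      intro t; rw [hg, hA, hB]; rfl
    have hgu : g u = v := by
      rw [hgval, Equiv.swap_apply_of_ne_of_ne h1 h2, Equiv.swap_apply_left]
    -- p and q lie in {u, v, w}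
    have hmem : ∀ t, g t ≠ t → t = u ∨ t = v ∨ t = w := by
      intro t ht
      by_contra hcon
      push_neg at hcon
      obtain ⟨c1, c2, c3⟩ := hcon
      apply ht
      rw [hgval, Equiv.swap_apply_of_ne_of_ne c2 c3, Equiv.swap_apply_of_ne_of_ne c1 c2]
    have hqne : q ≠ p := fun hh => hpq hh.symm
    -- helper for the (u,w) configuration: then c = swap u v = a
    have huw : d = Equiv.swap u w → c = a := by
      intro hduw
      have hcu : c u = v := by
        rw [hcval, hgu, hduw, Equiv.swap_apply_of_ne_of_ne (fun hh => h1 hh.symm) h3]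
      have hcune : c u ≠ u := by rw [hcu]; exact fun hh => h1 hh.symm
      have := swap_eq_of_ne' hc hcune
      rw [hcu] at this
      rw [this, hA]
    rcases hmem p hgp with rfl | rfl | rfl
    · rcases hmem q hgq with rfl | rfl | rfl
      · exact absurd rfl hpq
      · left; rw [hdpq, hA]
      · right; right; left; exact huw hdpq
    · rcases hmem q hgq with rfl | rfl | rfl
      · left; rw [hdpq, Equiv.swap_comm, hA]
      · exact absurd rfl hpq
      · right; left; rw [hdpq, hB]
    · rcases hmem q hgq with rfl | rfl | rfl
      · right; right; left; exact huw (by rw [hdpq, Equiv.swap_comm])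
      · right; left; rw [hdpq, Equiv.swap_comm, hB]
      · exact absurd rfl hpq

/-- The identity of `S_n` is not a product of 2 distinct transpositions,
nor of 4 distinct transpositions. -/
theorem stmt13 (n : ℕ) (L : List (Equiv.Perm (Fin n)))
    (hL : ∀ τ ∈ L, τ.IsSwap) (hnodup : L.Nodup) (hprod : L.prod = 1) :
    L.length ≠ 2 ∧ L.length ≠ 4 := by
  constructor
  · intro hlen
    obtain ⟨a, b, rfl⟩ := List.length_eq_two.mp hlen
    have ha : a.IsSwap := hL a (by simp)
    have hb : b.IsSwap := hL b (by simp)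
    have hab : a ≠ b := by simpa using hnodup
    have hprod' : a * b = 1 := by simpa using hprod
    have h2 : a⁻¹ = b := inv_eq_of_mul_eq_one_right hprod'
    exact hab (by rw [← h2, isSwap_inv_eq ha])
  · intro hlen
    match L, hlen with
    | [a, b, c', d'], _ =>
      have ha : a.IsSwap := hL a (by simp)
      have hb : b.IsSwap := hL b (by simp)
      have hc : c'.IsSwap := hL c' (by simp)
      have hd : d'.IsSwap := hL d' (by simp)
      simp only [List.nodup_cons, List.mem_cons, List.mem_singleton, List.not_mem_nil,
        List.nodup_nil] at hnodup
      have hprod' : a * b * c' * d' = 1 := by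
        simpa [mul_assoc] using hprod
      -- a * b = d' * c'
      have hkey : a * b = d' * c' := by
        have h1 : a * b = (c' * d')⁻¹ := by
          rw [eq_inv_iff_mul_eq_one, ← mul_assoc]
          exact hprod'
        rw [h1, mul_inv_rev, isSwap_inv_eq hc, isSwap_inv_eq hd]
      have hab : a ≠ b := by tauto
      have hdc : d' ≠ c' := by
        intro hh
        rcases hnodup with ⟨_, _, _, hcd⟩
        exact absurd hh.symm (by tauto)
      rcases key ha hb hd hc hab hdc hkey with hh | hh | hh | hh <;>
        · first
          | exact absurd hh.symm (by tauto)
          | exact absurd hh (by tauto)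
end

section
/- If m is an even integer with 6 ≤ m ≤ n(n-1)/2, then the identity permutation in S_n can be expressed as a product of m pairwise distinct transpositions. -/
/-!
If some ordering of a list of transpositions multiplies to `1`, then so does some ordering of the
list enlarged by a pair `(x a), (x b)` with `(a b)` already in it, because
`(x a) (a b) (x b) = (a b)`. The six transpositions of the vertices `k+1, …, k+4` multiply to `1`,
and attaching each of the vertices `1, …, k` to both ends of the edges `(k+1, k+2)` and
`(k+3, k+4)` adds `4k` further edges two at a time. This gives lists of every even length
from `6` to `4k + 6` whose edges all meet `{k+1, …, k+4}`, so they are disjoint from the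
`C(k, 2)` edges inside `[1, k]`. Since `C(k + 4, 2) = C(k, 2) + 4k + 6`, induction on `n` covers
every even `m` with `6 ≤ m ≤ C(n, 2)`, except `n = 7, m = 20`, which needs a list of its own.
-/

open Equiv Function
open List hiding swap

def RearrangesToOne {M : Type*} [Monoid M] (l : List M) : Prop :=
  ∃ l' : List M, l' ~ l ∧ l'.prod = 1

namespace RearrangesToOne

variable {M : Type*} [Monoid M] {l l₁ l₂ : List M}

theorem append (h₁ : RearrangesToOne l₁) (h₂ : RearrangesToOne l₂) :
    RearrangesToOne (l₁ ++ l₂) := by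
  obtain ⟨l₁', hp₁, h₁⟩ := h₁
  obtain ⟨l₂', hp₂, h₂⟩ := h₂
  exact ⟨l₁' ++ l₂', hp₁.append hp₂, by rw [prod_append, h₁, h₂, one_mul]⟩

theorem cons_cons {c x y : M} (h : RearrangesToOne l) (hc : c ∈ l) (hxy : x * c * y = c) :
    RearrangesToOne (x :: y :: l) := by
  obtain ⟨l', hp, hprod⟩ := h
  obtain ⟨A, B, rfl⟩ := append_of_mem (hp.mem_iff.2 hc)
  refine ⟨A ++ x :: c :: y :: B, ?_, ?_⟩
  · refine Perm.trans ?_ ((hp.cons y).cons x)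
    calc A ++ x :: c :: y :: B ~ x :: (A ++ c :: y :: B) := perm_middle
      _ ~ x :: y :: (A ++ c :: B) := by
        refine Perm.cons x ?_
        simpa only [append_assoc, singleton_append] using
          perm_middle (l₁ := A ++ [c]) (l₂ := B) (a := y)
  · calc (A ++ x :: c :: y :: B).prod = A.prod * (x * c * y) * B.prod := by
          simp [mul_assoc]
      _ = (A ++ c :: B).prod := by rw [hxy]; simp [mul_assoc]
      _ = 1 := hprod

end RearrangesToOne

theorem swap_mul_swap_mul_swap_of_ne_of_ne {α : Type*} [DecidableEq α] {a b x : α}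
    (hxa : x ≠ a) (hxb : x ≠ b) : swap x a * swap a b * swap x b = swap a b := by
  rw [mul_assoc, mul_swap_eq_swap_mul, swap_apply_of_ne_of_ne hxa hxb, swap_apply_right,
    swap_mul_self_mul]

theorem RearrangesToOne.cons_cons_swap {α : Type*} [DecidableEq α] {E : List (α × α)}
    {a b x : α} (h : RearrangesToOne (E.map (uncurry swap))) (hc : (a, b) ∈ E) (hxa : x ≠ a)
    (hxb : x ≠ b) : RearrangesToOne (((x, a) :: (x, b) :: E).map (uncurry swap)) :=
  h.cons_cons (mem_map_of_mem hc) (swap_mul_swap_mul_swap_of_ne_of_ne hxa hxb)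

theorem nodup_map_swap {E : List (ℕ × ℕ)} (hE : E.Nodup) (hlt : ∀ e ∈ E, e.1 < e.2) :
    (E.map (uncurry swap)).Nodup := by
  refine hE.map_on ?_
  rintro ⟨a, b⟩ he ⟨c, d⟩ he' heq
  have hab : a < b := hlt _ he
  have hcd : c < d := hlt _ he'
  have h : swap c d a = b := by simpa using (congrArg (· a) heq).symm
  rw [swap_apply_def] at h
  split_ifs at h <;> simp only [Prod.mk.injEq] <;> omega

def k4Edges (a : ℕ) : List (ℕ × ℕ) :=
  [(a, a + 1), (a + 2, a + 3), (a, a + 2), (a + 1, a + 3), (a, a + 3), (a + 1, a + 2)]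

theorem prod_map_swap_k4Edges (a : ℕ) : ((k4Edges a).map (uncurry swap)).prod = 1 := by
  ext x
  simp only [k4Edges, map_cons, map_nil, prod_cons, prod_nil, mul_one, Perm.mul_apply,
    uncurry_apply_pair, Perm.one_apply]
  rcases (by omega : x = a ∨ x = a + 1 ∨ x = a + 2 ∨ x = a + 3 ∨
      (x ≠ a ∧ x ≠ a + 1 ∧ x ≠ a + 2 ∧ x ≠ a + 3)) with rfl | rfl | rfl | rfl | ⟨h₀, h₁, h₂, h₃⟩
  all_goals simp [swap_apply_of_ne_of_ne, *]

theorem bounds_of_mem_k4Edges {a : ℕ} {e : ℕ × ℕ} (he : e ∈ k4Edges a) :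
    a ≤ e.1 ∧ e.1 < e.2 ∧ e.2 ≤ a + 3 := by
  simp only [k4Edges, mem_cons, mem_nil_iff, or_false] at he
  rcases he with rfl | rfl | rfl | rfl | rfl | rfl <;> omega

/-- The `j`-th pair joins the vertex `j / 2 + 1` to both ends of the edge `(k + 1, k + 2)`
(`j` even) or `(k + 3, k + 4)` (`j` odd) of `k4Edges (k + 1)`. -/
def hubEdges (k : ℕ) : ℕ → List (ℕ × ℕ)
  | 0 => []
  | j + 1 =>
    (j / 2 + 1, k + 2 * (j % 2) + 1) :: (j / 2 + 1, k + 2 * (j % 2) + 2) :: hubEdges k j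

theorem exists_of_mem_hubEdges {k j : ℕ} {e : ℕ × ℕ} (he : e ∈ hubEdges k j) :
    ∃ t < j, e.1 = t / 2 + 1 ∧ (e.2 = k + 2 * (t % 2) + 1 ∨ e.2 = k + 2 * (t % 2) + 2) := by
  induction j with
  | zero => simp [hubEdges] at he
  | succ j ih =>
    simp only [hubEdges, mem_cons] at he
    rcases he with rfl | rfl | he
    · exact ⟨j, j.lt_succ_self, rfl, Or.inl rfl⟩
    · exact ⟨j, j.lt_succ_self, rfl, Or.inr rfl⟩
    · obtain ⟨t, ht, h⟩ := ih he
      exact ⟨t, by omega, h⟩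

theorem length_hubEdges (k j : ℕ) : (hubEdges k j).length = 2 * j := by
  induction j with
  | zero => rfl
  | succ j ih => simp only [hubEdges, length_cons, ih]; ring

theorem nodup_hubEdges (k j : ℕ) : (hubEdges k j).Nodup := by
  induction j with
  | zero => exact nodup_nil
  | succ j ih =>
    have hnew : ∀ r, 1 ≤ r → r ≤ 2 → (j / 2 + 1, k + 2 * (j % 2) + r) ∉ hubEdges k j := by
      intro r hr₁ hr₂ he
      obtain ⟨t, ht, h₁, h₂⟩ := exists_of_mem_hubEdges he
      omega
    refine nodup_cons.2 ⟨?_, nodup_cons.2 ⟨hnew 2 one_le_two le_rfl, ih⟩⟩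
    rw [mem_cons, not_or]
    exact ⟨by simp, hnew 1 le_rfl one_le_two⟩

def k4WithHubs (k j : ℕ) : List (ℕ × ℕ) := hubEdges k j ++ k4Edges (k + 1)

theorem length_k4WithHubs (k j : ℕ) : (k4WithHubs k j).length = 2 * j + 6 := by
  simp [k4WithHubs, length_hubEdges, k4Edges]

theorem bounds_of_mem_k4WithHubs {k j : ℕ} (hj : j ≤ 2 * k) {e : ℕ × ℕ}
    (he : e ∈ k4WithHubs k j) : 1 ≤ e.1 ∧ e.1 < e.2 ∧ k < e.2 ∧ e.2 ≤ k + 4 := by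
  rcases mem_append.1 he with he | he
  · obtain ⟨t, ht, h₁, h₂⟩ := exists_of_mem_hubEdges he
    omega
  · have := bounds_of_mem_k4Edges he
    omega

theorem nodup_k4WithHubs {k j : ℕ} (hj : j ≤ 2 * k) : (k4WithHubs k j).Nodup := by
  refine nodup_append.2 ⟨nodup_hubEdges k j, by simp [k4Edges], ?_⟩
  intro e he e' he' rfl
  obtain ⟨t, ht, h₁, -⟩ := exists_of_mem_hubEdges he
  have := bounds_of_mem_k4Edges he'
  omega

theorem rearrangesToOne_k4WithHubs {k j : ℕ} (hj : j ≤ 2 * k) :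
    RearrangesToOne ((k4WithHubs k j).map (uncurry swap)) := by
  induction j with
  | zero => exact ⟨_, Perm.refl _, prod_map_swap_k4Edges _⟩
  | succ j ih =>
    have hc : (k + 2 * (j % 2) + 1, k + 2 * (j % 2) + 2) ∈ k4WithHubs k j := by
      refine mem_append_right _ ?_
      rcases Nat.mod_two_eq_zero_or_one j with h | h <;> simp [k4Edges, h]
    exact (ih (by omega)).cons_cons_swap hc (by omega) (by omega)

def IsIdentityFactorization (n m : ℕ) (E : List (ℕ × ℕ)) : Prop :=
  E.length = m ∧ E.Nodup ∧ (∀ e ∈ E, 1 ≤ e.1 ∧ e.1 < e.2 ∧ e.2 ≤ n) ∧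
    RearrangesToOne (E.map (uncurry swap))

theorem isIdentityFactorization_nil (n : ℕ) : IsIdentityFactorization n 0 [] :=
  ⟨rfl, nodup_nil, by simp, ⟨[], Perm.refl _, prod_nil⟩⟩

theorem IsIdentityFactorization.append_k4WithHubs {k m j : ℕ} {E : List (ℕ × ℕ)}
    (hE : IsIdentityFactorization k m E) (hj : j ≤ 2 * k) :
    IsIdentityFactorization (k + 4) (m + (2 * j + 6)) (E ++ k4WithHubs k j) := by
  obtain ⟨hlen, hnd, hbd, hone⟩ := hE
  refine ⟨by rw [length_append, hlen, length_k4WithHubs],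
    nodup_append.2 ⟨hnd, nodup_k4WithHubs hj, ?_⟩, fun e he => ?_,
    by rw [map_append]; exact hone.append (rearrangesToOne_k4WithHubs hj)⟩
  · intro e he e' he' rfl
    have := hbd e he
    have := bounds_of_mem_k4WithHubs hj he'
    omega
  · rcases mem_append.1 he with he | he
    · have := hbd e he
      omega
    · have := bounds_of_mem_k4WithHubs hj he
      omega

/-- `K₇` without the edge `(2, 7)`. -/
def k7MinusEdge : List (ℕ × ℕ) :=
  (1, 2) :: (1, 3) :: (2, 3) :: (2, 6) :: (3, 6) :: (3, 7) :: (3, 4) :: (3, 5) :: k4WithHubs 3 3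

theorem isIdentityFactorization_k7MinusEdge : IsIdentityFactorization 7 20 k7MinusEdge := by
  refine ⟨rfl, by decide, by decide, ?_⟩
  have h₀ := rearrangesToOne_k4WithHubs (show 3 ≤ 2 * 3 by norm_num)
  have h₁ := h₀.cons_cons_swap (a := 4) (b := 5) (x := 3) (by decide) (by decide) (by decide)
  have h₂ := h₁.cons_cons_swap (a := 6) (b := 7) (x := 3) (by decide) (by decide) (by decide)
  have h₃ := h₂.cons_cons_swap (a := 3) (b := 6) (x := 2) (by decide) (by decide) (by decide)
  exact h₃.cons_cons_swap (a := 2) (b := 3) (x := 1) (by decide) (by decide) (by decide)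

theorem four_le_of_six_le_choose_two {n : ℕ} (h : 6 ≤ n.choose 2) : 4 ≤ n := by
  rw [Nat.choose_two_right] at h
  by_contra! hn
  interval_cases n <;> omega

theorem choose_two_add_four (k : ℕ) : (k + 4).choose 2 = k.choose 2 + (4 * k + 6) := by
  simp only [Nat.choose_succ_succ', Nat.choose_zero_right, zero_add, Nat.choose_one_right,
    Nat.reduceAdd]
  ring

theorem exists_isIdentityFactorization {n m : ℕ} (hm : Even m) (h6 : 6 ≤ m)
    (hmn : m ≤ n.choose 2) : ∃ E, IsIdentityFactorization n m E := by
  induction n using Nat.strong_induction_on generalizing m with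
  | _ n ih =>
  obtain ⟨k, rfl⟩ : ∃ k, n = k + 4 :=
    ⟨n - 4, by have := four_le_of_six_le_choose_two (h6.trans hmn); omega⟩
  rw [choose_two_add_four] at hmn
  obtain ⟨r, rfl⟩ := hm
  by_cases hsmall : r + r ≤ 4 * k + 6
  · have h := (isIdentityFactorization_nil k).append_k4WithHubs (j := r - 3) (by omega)
    rw [show 0 + (2 * (r - 3) + 6) = r + r by omega] at h
    exact ⟨_, h⟩
  by_cases hk : 4 ≤ k
  · -- the part inside `[1, k]` gets `2 * s` edges: at least 6, and at most `4k + 6` are left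
    set s := max 3 (r - (2 * k + 3))
    have h6k : 6 ≤ k.choose 2 := Nat.choose_le_choose 2 hk
    obtain ⟨E, hE⟩ := @ih k (by omega) (s + s) ⟨s, rfl⟩ (by omega) (by omega)
    have h := hE.append_k4WithHubs (j := r - s - 3) (by omega)
    rw [show s + s + (2 * (r - s - 3) + 6) = r + r by omega] at h
    exact ⟨_, h⟩
  rw [Nat.choose_two_right] at hmn
  obtain rfl : k = 3 := by interval_cases k <;> omega
  obtain rfl : r = 10 := by omega
  exact ⟨_, isIdentityFactorization_k7MinusEdge⟩

/-- Theorem 4 (sufficiency): if `m` is even and `6 ≤ m ≤ n(n-1)/2`, then the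
identity of `S_n` is a product of `m` pairwise distinct transpositions. -/
theorem stmt15 (n m : ℕ) (hm : Even m) (h6 : 6 ≤ m) (hub : m ≤ n * (n - 1) / 2) :
    ∃ L : List (ℕ × ℕ),
      L.length = m ∧
      (∀ p ∈ L, p.1 ≠ p.2 ∧ p.1 ∈ Finset.Icc 1 n ∧ p.2 ∈ Finset.Icc 1 n) ∧
      (L.map fun p => Equiv.swap p.1 p.2).Nodup ∧
      (L.map fun p => Equiv.swap p.1 p.2).prod = 1 := by
  obtain ⟨E, hlen, hnd, hbd, l, hperm, hprod⟩ :=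
    exists_isIdentityFactorization hm h6 (by rwa [Nat.choose_two_right])
  obtain ⟨L, rfl, hL⟩ : Relation.Comp (· = map (uncurry swap) ·) (· ~ ·) l E := by
    rwa [eq_map_comp_perm]
  have hbdL : ∀ e ∈ L, 1 ≤ e.1 ∧ e.1 < e.2 ∧ e.2 ≤ n := fun e he => hbd e (hL.mem_iff.1 he)
  refine ⟨L, hL.length_eq.trans hlen, fun e he => ?_,
    nodup_map_swap (hL.nodup_iff.2 hnd) fun e he => (hbdL e he).2.1, hprod⟩
  have := hbdL e he
  simp only [Finset.mem_Icc]
  omega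
end

section
/- If the identity permutation in S_n equals a product of m pairwise distinct transpositions with m ≥ 1, then m is even and 6 ≤ m ≤ n(n-1)/2. -/
/-!
Move the transpositions into `Perm (Icc 1 n)`, a finite symmetric group. Parity is the sign.
A transposition is determined by its support, a 2-subset, which gives the upper bound.
Lengths 2 and 4 are impossible: `s t = 1` forces `s = t`, and `s t u v = 1` gives `s t = v u`.
If `s` and `t` are disjoint, then `s t` moves 4 points, so `v` and `u` are disjoint too, and
uniqueness of the disjoint cycle decomposition gives `{s, t} = {u, v}`. Otherwise `s t` moves
at most 3 points, and all four transpositions live on them, but 3 points carry only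
3 transpositions.
-/

open Finset

namespace Equiv.Perm

variable {α : Type*} [DecidableEq α]

theorem IsSwap.inv_eq_self {σ : Perm α} (hσ : σ.IsSwap) : σ⁻¹ = σ := by
  obtain ⟨x, y, -, rfl⟩ := hσ
  exact swap_inv x y

theorem IsSwap.eq_swap_of_apply_ne {σ : Perm α} (hσ : σ.IsSwap) {x : α} (hx : σ x ≠ x) :
    σ = swap x (σ x) := by
  refine hσ.isCycle.eq_swap_of_apply_apply_eq_self hx ?_
  obtain ⟨a, b, -, rfl⟩ := hσ
  exact swap_apply_self a b x

theorem IsSwap.mul_eq_one_iff {σ τ : Perm α} (hτ : τ.IsSwap) : σ * τ = 1 ↔ σ = τ := by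
  rw [mul_eq_one_iff_eq_inv, hτ.inv_eq_self]

section Fintype

variable [Fintype α]

theorem IsSwap.eq_of_support_eq {σ τ : Perm α} (hσ : σ.IsSwap) (hτ : τ.IsSwap)
    (h : σ.support = τ.support) : σ = τ := by
  obtain ⟨x, hx⟩ : σ.support.Nonempty := card_pos.1 (by rw [card_support_eq_two.2 hσ]; omega)
  have hσx := mem_support.1 hx
  have hτx : τ x ≠ x := mem_support.1 (h ▸ hx)
  have hστ : σ x ∈ ({x, τ x} : Finset α) := by
    rw [← support_swap hτx.symm, ← hτ.eq_swap_of_apply_ne hτx, ← h]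
    exact apply_mem_support.2 hx
  rw [mem_insert, mem_singleton] at hστ
  rw [hσ.eq_swap_of_apply_ne hσx, hτ.eq_swap_of_apply_ne hτx, hστ.resolve_left hσx]

theorem IsSwap.support_mul {σ τ : Perm α} (hσ : σ.IsSwap) (hτ : τ.IsSwap) (hne : σ ≠ τ) :
    (σ * τ).support = σ.support ∪ τ.support := by
  refine (support_mul_le σ τ).antisymm fun x hx => mem_support.2 fun hfix => ?_
  rw [mul_apply] at hfix
  by_cases hτx : τ x = x
  · rw [hτx] at hfix
    simp [mem_support, hfix, hτx] at hx
  · -- `σ` and `τ` both exchange `x` and `τ x`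
    refine hne ?_
    have hσ' := hσ.eq_swap_of_apply_ne (x := τ x) (by rw [hfix]; exact Ne.symm hτx)
    rw [hσ', hfix, swap_comm, ← hτ.eq_swap_of_apply_ne hτx]

theorem IsSwap.card_support_mul_le_three {σ τ : Perm α} (hσ : σ.IsSwap) (hτ : τ.IsSwap)
    (h : ¬σ.Disjoint τ) : #(σ * τ).support ≤ 3 := by
  rw [disjoint_iff_disjoint_support, not_disjoint_iff_nonempty_inter] at h
  have := card_union_add_card_inter σ.support τ.support
  rw [card_support_eq_two.2 hσ, card_support_eq_two.2 hτ] at this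
  have := h.card_pos
  have := card_le_card (support_mul_le σ τ)
  simp only [Finset.sup_eq_union] at this
  omega

theorem length_le_choose_two_of_isSwap {l : List (Perm α)} {T : Finset α}
    (hl : ∀ σ ∈ l, σ.IsSwap) (hnd : l.Nodup) (hT : ∀ σ ∈ l, σ.support ⊆ T) :
    l.length ≤ (#T).choose 2 := by
  have hinj : Set.InjOn support {σ | σ ∈ l} := fun σ hσ τ hτ h =>
    (hl σ hσ).eq_of_support_eq (hl τ hτ) h
  calc l.length = #(l.toFinset.image support) := by
        rw [card_image_of_injOn (by simpa using hinj), List.toFinset_card_of_nodup hnd]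
    _ ≤ #(T.powersetCard 2) := by
        refine card_le_card fun A hA => ?_
        obtain ⟨σ, hσ, rfl⟩ := mem_image.1 hA
        rw [List.mem_toFinset] at hσ
        exact mem_powersetCard.2 ⟨hT σ hσ, card_support_eq_two.2 (hl σ hσ)⟩
    _ = (#T).choose 2 := card_powersetCard 2 T

theorem IsSwap.mul_ne_mul {s t u v : Perm α} (hs : s.IsSwap) (ht : t.IsSwap) (hu : u.IsSwap)
    (hv : v.IsSwap) (hnd : [s, t, u, v].Nodup) : s * t ≠ u * v := by
  intro h
  simp only [List.nodup_cons, List.mem_cons, List.not_mem_nil, or_false,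
    not_or, List.nodup_nil, not_false_eq_true, and_true] at hnd
  obtain ⟨⟨hst, hsu, hsv⟩, ⟨htu, htv⟩, huv⟩ := hnd
  by_cases hdst : s.Disjoint t
  · have hduv : u.Disjoint v := by
      by_contra hduv
      have := hu.card_support_mul_le_three hv hduv
      rw [← h, hdst.card_support_mul, card_support_eq_two.2 hs, card_support_eq_two.2 ht] at this
      omega
    have hfactors := congrArg cycleFactorsFinset h
    rw [hdst.cycleFactorsFinset_mul_eq_union, hduv.cycleFactorsFinset_mul_eq_union,
      hs.isCycle.cycleFactorsFinset_eq_singleton, ht.isCycle.cycleFactorsFinset_eq_singleton,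
      hu.isCycle.cycleFactorsFinset_eq_singleton, hv.isCycle.cycleFactorsFinset_eq_singleton]
      at hfactors
    have hs_mem : s ∈ ({u} ∪ {v} : Finset (Perm α)) := hfactors ▸ by simp
    simp only [mem_union, mem_singleton] at hs_mem
    tauto
  · have hsub : ∀ σ ∈ [s, t, u, v], σ.support ⊆ (s * t).support := by
      have hst_supp := hs.support_mul ht hst
      have huv_supp : (s * t).support = u.support ∪ v.support := h ▸ hu.support_mul hv huv
      simp only [List.forall_mem_cons, List.not_mem_nil, IsEmpty.forall_iff, implies_true,
        and_true]
      exact ⟨hst_supp ▸ subset_union_left, hst_supp ▸ subset_union_right,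
        huv_supp ▸ subset_union_left, huv_supp ▸ subset_union_right⟩
    have hlen := length_le_choose_two_of_isSwap (by simp [hs, ht, hu, hv])
      (by simp [*, Ne.symm]) hsub
    have := Nat.choose_le_choose 2 (hs.card_support_mul_le_three ht hdst)
    simp only [List.length_cons, List.length_nil] at hlen
    norm_num [Nat.choose] at this
    omega

theorem even_length_of_prod_eq_one {l : List (Perm α)} (hl : ∀ σ ∈ l, σ.IsSwap)
    (h : l.prod = 1) : Even l.length := by
  have := sign_prod_list_swap hl
  rw [h, sign_one] at this
  exact (neg_one_pow_eq_one_iff_even (by decide)).1 this.symm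

theorem six_le_length_of_prod_eq_one {l : List (Perm α)} (hl : ∀ σ ∈ l, σ.IsSwap)
    (hnd : l.Nodup) (h : l.prod = 1) (hne : l ≠ []) : 6 ≤ l.length := by
  have heven := even_length_of_prod_eq_one hl h
  rcases l with _ | ⟨s, _ | ⟨t, _ | ⟨u, _ | ⟨v, _ | ⟨w, l⟩⟩⟩⟩⟩
  · exact absurd rfl hne
  · simp at heven
  · simp only [List.prod_cons, List.prod_nil, mul_one] at h
    simp [(hl t (by simp)).mul_eq_one_iff.1 h] at hnd
  · simp [Nat.even_add_one] at heven
  · simp only [List.prod_cons, List.prod_nil, mul_one] at h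
    rw [← mul_assoc] at h
    refine absurd ?_ (IsSwap.mul_ne_mul (hl s (by simp)) (hl t (by simp)) (hl v (by simp))
      (hl u (by simp)) ((((List.Perm.swap v u []).cons t).cons s).nodup_iff.1 hnd))
    rw [mul_eq_one_iff_eq_inv.1 h, mul_inv_rev, (hl u (by simp)).inv_eq_self,
      (hl v (by simp)).inv_eq_self]
  · simp only [List.length_cons] at heven ⊢
    obtain ⟨k, hk⟩ := heven
    omega

end Fintype

theorem exists_isSwap_map_ofSubtype {s : Finset α} {L : List (α × α)}
    (hL : ∀ p ∈ L, p.1 ≠ p.2 ∧ p.1 ∈ s ∧ p.2 ∈ s) :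
    ∃ l : List (Perm s), (∀ σ ∈ l, σ.IsSwap) ∧
      l.map ofSubtype = L.map fun p => swap p.1 p.2 := by
  induction L with
  | nil => exact ⟨[], by simp, rfl⟩
  | cons p L ih =>
    obtain ⟨hp, hp1, hp2⟩ := hL p (by simp)
    obtain ⟨l, hl, hmap⟩ := ih fun q hq => hL q (by simp [hq])
    refine ⟨swap ⟨p.1, hp1⟩ ⟨p.2, hp2⟩ :: l, ?_, ?_⟩
    · simp only [List.mem_cons, forall_eq_or_imp]
      exact ⟨⟨_, _, fun h => hp (congrArg Subtype.val h), rfl⟩, hl⟩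
    · rw [List.map_cons, hmap, ofSubtype_swap_eq, List.map_cons]

end Equiv.Perm

open Equiv.Perm

/-- Theorem 4 (necessity): if the identity of `S_n` is a product of `m ≥ 1`
pairwise distinct transpositions, then `m` is even and `6 ≤ m ≤ n(n-1)/2`. -/
theorem stmt16 (n m : ℕ) (hm : 1 ≤ m) (L : List (ℕ × ℕ))
    (hlen : L.length = m)
    (hL : ∀ p ∈ L, p.1 ≠ p.2 ∧ p.1 ∈ Finset.Icc 1 n ∧ p.2 ∈ Finset.Icc 1 n)
    (hnodup : (L.map fun p => Equiv.swap p.1 p.2).Nodup)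
    (hprod : (L.map fun p => Equiv.swap p.1 p.2).prod = 1) :
    Even m ∧ 6 ≤ m ∧ m ≤ n * (n - 1) / 2 := by
  obtain ⟨l, hswap, hmap⟩ := exists_isSwap_map_ofSubtype hL
  have hl_len : l.length = m := by rw [← hlen, ← L.length_map, ← hmap, List.length_map]
  have hl_nodup : l.Nodup := (hmap ▸ hnodup).of_map _
  have hl_prod : l.prod = 1 := ofSubtype_injective (by rw [map_list_prod, hmap, hprod, map_one])
  refine ⟨hl_len ▸ even_length_of_prod_eq_one hswap hl_prod,
    hl_len ▸ six_le_length_of_prod_eq_one hswap hl_nodup hl_prod ?_, ?_⟩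
  · rintro rfl
    rw [List.length_nil] at hl_len
    omega
  · calc m = l.length := hl_len.symm
      _ ≤ (#(univ : Finset (Finset.Icc 1 n))).choose 2 :=
        length_le_choose_two_of_isSwap hswap hl_nodup fun σ _ => subset_univ _
      _ = n * (n - 1) / 2 := by
        rw [card_univ, Fintype.card_coe, Nat.card_Icc, Nat.add_sub_cancel, Nat.choose_two_right]
end

section
/- Let P be a nontrivial permutation of {1,...,n} and let σ be a product of transpositions in S_{n+2}, each moving at least one of x = n+1 or y = n+2, such that σ · P is the identity (where P is viewed in S_{n+2} fixing x and y). Then every element of {1,...,n} moved by P occurs as an entry of some transposition factor of σ; in particular σ has at least as many factors as the number of points moved by P. -/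
/-! A point not occurring in any factor is fixed by the product of transpositions, and the
product is `P⁻¹`, so every point moved by `P` occurs in some factor. Each factor has an entry
in `{n+1, n+2}`, hence at most one entry in `{1, …, n}`: distinct moved points therefore occur in
distinct factors, which gives the bound on the number of factors. -/

section SwapProduct

variable {α : Type*} [DecidableEq α]

theorem List.prod_map_swap_apply_of_forall_ne {L : List (α × α)} {a : α}
    (h : ∀ p ∈ L, p.1 ≠ a ∧ p.2 ≠ a) :
    (L.map fun p => Equiv.swap p.1 p.2).prod a = a := by
  induction L with
  | nil => rfl
  | cons p L ih =>
    obtain ⟨h₁, h₂⟩ := h p List.mem_cons_self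
    simp only [List.map_cons, List.prod_cons, Equiv.Perm.mul_apply]
    rw [ih fun q hq => h q (List.mem_cons_of_mem _ hq)]
    exact Equiv.swap_apply_of_ne_of_ne h₁.symm h₂.symm

theorem List.exists_mem_entry_of_prod_map_swap_mul_eq_one {L : List (α × α)}
    {P : Equiv.Perm α} (hundo : (L.map fun p => Equiv.swap p.1 p.2).prod * P = 1)
    {a : α} (ha : P a ≠ a) : ∃ p ∈ L, p.1 = a ∨ p.2 = a := by
  by_contra! hnot
  have hfix := List.prod_map_swap_apply_of_forall_ne hnot
  rw [eq_inv_of_mul_eq_one_left hundo, Equiv.Perm.inv_eq_iff_eq] at hfix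
  exact ha hfix.symm

end SwapProduct

theorem stmt19_general (n : ℕ) (P : Equiv.Perm ℕ)
    (L : List (ℕ × ℕ))
    (hL : ∀ p ∈ L, p.1 ≠ p.2 ∧ p.1 ∈ Finset.Icc 1 (n + 2) ∧
      p.2 ∈ Finset.Icc 1 (n + 2) ∧
      (p.1 = n + 1 ∨ p.1 = n + 2 ∨ p.2 = n + 1 ∨ p.2 = n + 2))
    (hundo : (L.map fun p => Equiv.swap p.1 p.2).prod * P = 1) :
    (∀ a, P a ≠ a → ∃ p ∈ L, p.1 = a ∨ p.2 = a) ∧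
    ((Finset.Icc 1 n).filter fun a => P a ≠ a).card ≤ L.length := by
  have hentry : ∀ a, P a ≠ a → ∃ p ∈ L, p.1 = a ∨ p.2 = a := fun a ha =>
    List.exists_mem_entry_of_prod_map_swap_mul_eq_one hundo ha
  refine ⟨hentry, le_trans ?_ L.toFinset_card_le⟩
  refine Finset.card_le_card_of_forall_subsingleton (fun a p => p.1 = a ∨ p.2 = a)
    (fun a ha => ?_) (fun p hp a ha b hb => ?_)
  · obtain ⟨p, hp, hpa⟩ := hentry a (Finset.mem_filter.mp ha).2
    exact ⟨p, List.mem_toFinset.mpr hp, hpa⟩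
  · obtain ⟨-, -, -, hxy⟩ := hL p (List.mem_toFinset.mp hp)
    simp only [Set.mem_ofPred_eq, Finset.mem_filter, Finset.mem_Icc] at ha hb
    omega

/-- If `P` is a nontrivial permutation supported on `{1,...,n}` and `σ` is a
product of transpositions in `S_{n+2}`, each moving `x = n+1` or `y = n+2`,
with `σ · P = 1`, then every point moved by `P` occurs as an entry of some
factor of `σ`; in particular `σ` has at least as many factors as the number of
points moved by `P`. -/
theorem stmt19 (n : ℕ) (P : Equiv.Perm ℕ) (hPnt : P ≠ 1)
    (hPsupp : ∀ a, P a ≠ a → a ∈ Finset.Icc 1 n)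
    (L : List (ℕ × ℕ))
    (hL : ∀ p ∈ L, p.1 ≠ p.2 ∧ p.1 ∈ Finset.Icc 1 (n + 2) ∧
      p.2 ∈ Finset.Icc 1 (n + 2) ∧
      (p.1 = n + 1 ∨ p.1 = n + 2 ∨ p.2 = n + 1 ∨ p.2 = n + 2))
    (hundo : (L.map fun p => Equiv.swap p.1 p.2).prod * P = 1) :
    (∀ a, P a ≠ a → ∃ p ∈ L, p.1 = a ∨ p.2 = a) ∧
    ((Finset.Icc 1 n).filter fun a => P a ≠ a).card ≤ L.length :=
  stmt19_general n P L hL hundo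
end
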